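/- arXiv:0903.0433 — 7 statements merged into one kernel-verified Lean document; each statement's English description precedes it below -/
import Mathlib

section
/- Let f : ℝ^d → ℝ be measurable. Then ∫_{ℝ^d} |f(x)| dx ≤ Vol(B₁) · sup over all finite sets X ⊂ ℝ^d whose points are pairwise at distance ≥ 1 of ∑_{x ∈ X} |f(x)|, where B₁ is the unit ball. -/
/-!
Write `S` for the supremum and `v` for the measure of a unit ball; if `S = ∞` there is nothing
to prove. By the layer-cake formula `∫ f = ∫₀^∞ μ {f > t} dt`, and as `t ↦ μ {f > t}` is antitone,
`∫_{t > ε} μ {f > t} dt ≤ ∑_{k ≥ 1} ε μ {f > kε}`. Since `S < ∞` bounds the size of separated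
subsets of `{f > kε}`, a single 1-separated set `Y` can be extended greedily, from the highest
level down, so that its trace on every `{f > kε}` is a maximal separated subset, hence a 1-net,
of it. Then `μ {f > kε} ≤ v · #(Y ∩ {f > kε})`, and summing over `k` counts each `y ∈ Y` at most
`f y / ε` times, so `∑_k ε μ {f > kε} ≤ v ∑_{y ∈ Y} f y ≤ v S`.
-/

open MeasureTheory Metric Finset ENNReal

theorem Finset.card_mul_le_of_forall_succ_mul_le {K : Finset ℕ} {ε a : ℝ≥0∞}
    (hK : ∀ k ∈ K, (k + 1 : ℝ≥0∞) * ε ≤ a) : (#K : ℝ≥0∞) * ε ≤ a := by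
  rcases K.eq_empty_or_nonempty with rfl | hne
  · simp
  have hcard : #K ≤ K.max' hne + 1 := by
    simpa using card_le_card fun k hk => mem_range.2 (Nat.lt_succ_of_le (K.le_max' k hk))
  calc (#K : ℝ≥0∞) * ε ≤ (K.max' hne + 1 : ℕ) * ε := by gcongr
    _ ≤ a := by exact_mod_cast hK _ (K.max'_mem hne)

namespace SeparatedSum

variable {E : Type*} [PseudoMetricSpace E]

noncomputable def sepSup (f : E → ℝ) : ℝ≥0∞ :=
  ⨆ (X : Finset E) (_ : (X : Set E).Pairwise (1 ≤ dist · ·)), ∑ x ∈ X, ENNReal.ofReal (f x)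

theorem sum_le_sepSup {f : E → ℝ} {X : Finset E} (hX : (X : Set E).Pairwise (1 ≤ dist · ·)) :
    ∑ x ∈ X, ENNReal.ofReal (f x) ≤ sepSup f :=
  le_iSup₂ (f := fun (X : Finset E) (_ : (X : Set E).Pairwise (1 ≤ dist · ·)) =>
    ∑ x ∈ X, ENNReal.ofReal (f x)) X hX

theorem bddAbove_card_separated_of_sepSup_ne_top {f : E → ℝ} (hS : sepSup f ≠ ⊤) {t : ℝ}
    (ht : 0 < t) :
    BddAbove (card '' {X : Finset E | (X : Set E).Pairwise (1 ≤ dist · ·) ∧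
      ↑X ⊆ {x | t < f x}}) := by
  have ht' : ENNReal.ofReal t ≠ 0 := (ENNReal.ofReal_pos.2 ht).ne'
  obtain ⟨m, hm⟩ := ENNReal.exists_nat_gt (ENNReal.div_lt_top hS ht').ne
  refine ⟨m, ?_⟩
  rintro _ ⟨X, ⟨hX, hXt⟩, rfl⟩
  have hcard : (#X : ℝ≥0∞) * ENNReal.ofReal t ≤ sepSup f :=
    calc (#X : ℝ≥0∞) * ENNReal.ofReal t = ∑ _x ∈ X, ENNReal.ofReal t := by
          rw [sum_const, nsmul_eq_mul]
      _ ≤ ∑ x ∈ X, ENNReal.ofReal (f x) :=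
          sum_le_sum fun x hx => ENNReal.ofReal_le_ofReal (hXt hx).le
      _ ≤ sepSup f := sum_le_sepSup hX
  have : (#X : ℝ≥0∞) < m :=
    ((ENNReal.le_div_iff_mul_le (.inl ht') (.inl ENNReal.ofReal_ne_top)).2 hcard).trans_lt hm
  exact_mod_cast this.le

theorem exists_separated_net_superset {A : Set E}
    (hA : BddAbove (card '' {X : Finset E | (X : Set E).Pairwise (1 ≤ dist · ·) ∧ ↑X ⊆ A}))
    {Y : Finset E} (hY : (Y : Set E).Pairwise (1 ≤ dist · ·)) (hYA : ↑Y ⊆ A) :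
    ∃ Z : Finset E, Y ⊆ Z ∧ (Z : Set E).Pairwise (1 ≤ dist · ·) ∧ ↑Z ⊆ A ∧
      ∀ z ∈ A, ∃ x ∈ Z, dist z x < 1 := by
  classical
  set 𝒮 := {X : Finset E | Y ⊆ X ∧ (X : Set E).Pairwise (1 ≤ dist · ·) ∧ ↑X ⊆ A}
  have h𝒮 : BddAbove (card '' 𝒮) := hA.mono (Set.image_mono fun X hX => hX.2)
  have hY𝒮 : Y ∈ 𝒮 := ⟨subset_rfl, hY, hYA⟩
  obtain ⟨Z, hZ, hZmax⟩ := Nat.sSup_mem ⟨_, Set.mem_image_of_mem card hY𝒮⟩ h𝒮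
  refine ⟨Z, hZ.1, hZ.2.1, hZ.2.2, fun z hz => ?_⟩
  by_contra! hfar
  have hzZ : z ∉ Z := fun h => (hfar z h).not_gt (by simp)
  have hinsert : insert z Z ∈ 𝒮 := by
    refine ⟨hZ.1.trans (subset_insert z Z), ?_, ?_⟩
    · rw [coe_insert]
      exact hZ.2.1.insert_of_notMem hzZ fun x hx => ⟨hfar x hx, dist_comm x z ▸ hfar x hx⟩
    · rw [coe_insert]
      exact Set.insert_subset hz hZ.2.2
  have := le_csSup h𝒮 (Set.mem_image_of_mem _ hinsert)
  rw [card_insert_of_notMem hzZ, ← hZmax] at this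
  omega

theorem exists_separated_net_of_antitone {A : ℕ → Set E} (hA : Antitone A)
    (hbdd : ∀ k, BddAbove (card '' {X : Finset E | (X : Set E).Pairwise (1 ≤ dist · ·) ∧
      ↑X ⊆ A k})) (N : ℕ) :
    ∃ Y : Finset E, (Y : Set E).Pairwise (1 ≤ dist · ·) ∧ ↑Y ⊆ A 0 ∧
      ∀ k < N, ∀ z ∈ A k, ∃ y ∈ Y, y ∈ A k ∧ dist z y < 1 := by
  induction N generalizing A with
  | zero => exact ⟨∅, by simp, by simp, by simp⟩
  | succ N ih =>
    obtain ⟨Y, hY, hYA, hnet⟩ :=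
      ih (fun i j hij => hA (Nat.succ_le_succ hij)) fun k => hbdd (k + 1)
    obtain ⟨Z, hYZ, hZ, hZA, hZnet⟩ :=
      exists_separated_net_superset (hbdd 0) hY (hYA.trans (hA (Nat.zero_le 1)))
    refine ⟨Z, hZ, hZA, fun k hk z hz => ?_⟩
    cases k with
    | zero =>
      obtain ⟨x, hx, hzx⟩ := hZnet z hz
      exact ⟨x, hx, hZA hx, hzx⟩
    | succ k =>
      obtain ⟨y, hy, hyA, hzy⟩ := hnet k (by omega) z hz
      exact ⟨y, hYZ hy, hyA, hzy⟩

variable [MeasurableSpace E] {μ : Measure E} {v : ℝ≥0∞}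

theorem measure_le_card_mul_of_net (hball : ∀ x, μ (ball x 1) ≤ v) {A : Set E}
    {Y : Finset E} (hnet : ∀ z ∈ A, ∃ y ∈ Y, dist z y < 1) : μ A ≤ #Y * v := by
  have hcover : A ⊆ ⋃ y ∈ Y, ball y 1 := fun z hz => by
    obtain ⟨y, hy, hzy⟩ := hnet z hz
    exact Set.mem_biUnion hy (mem_ball.2 hzy)
  calc μ A ≤ ∑ y ∈ Y, μ (ball y 1) := (measure_mono hcover).trans (measure_biUnion_finset_le _ _)
    _ ≤ ∑ _y ∈ Y, v := sum_le_sum fun y _ => hball y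
    _ = #Y * v := by rw [sum_const, nsmul_eq_mul]

theorem sum_measure_superlevel_le (hball : ∀ x, μ (ball x 1) ≤ v) {f : E → ℝ}
    (hS : sepSup f ≠ ⊤) {ε : ℝ} (hε : 0 < ε) (N : ℕ) :
    ∑ k ∈ range N, ENNReal.ofReal ε * μ {x | (k + 1) * ε < f x} ≤ v * sepSup f := by
  classical
  set A : ℕ → Set E := fun k => {x | (k + 1) * ε < f x}
  have hA : Antitone A := fun i j hij x (hx : (j + 1) * ε < f x) =>
    show (i + 1) * ε < f x from lt_of_le_of_lt (by gcongr) hx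
  obtain ⟨Y, hY, -, hnet⟩ := exists_separated_net_of_antitone hA
    (fun k => bddAbove_card_separated_of_sepSup_ne_top hS (by positivity)) N
  have hcount : ∀ y ∈ Y, (#{k ∈ range N | y ∈ A k} : ℝ≥0∞) * ENNReal.ofReal ε ≤
      ENNReal.ofReal (f y) := fun y _ =>
    card_mul_le_of_forall_succ_mul_le fun k hk =>
      calc (k + 1 : ℝ≥0∞) * ENNReal.ofReal ε = ENNReal.ofReal ((k + 1) * ε) := by
            rw [ENNReal.ofReal_mul (by positivity)]; norm_cast
        _ ≤ ENNReal.ofReal (f y) := ENNReal.ofReal_le_ofReal (mem_filter.1 hk).2.le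
  calc ∑ k ∈ range N, ENNReal.ofReal ε * μ (A k)
      ≤ ∑ k ∈ range N, ENNReal.ofReal ε * (#{y ∈ Y | y ∈ A k} * v) := by
        gcongr with k hk
        exact measure_le_card_mul_of_net hball fun z hz => by
          obtain ⟨y, hy, hyA, hzy⟩ := hnet k (mem_range.1 hk) z hz
          exact ⟨y, mem_filter.2 ⟨hy, hyA⟩, hzy⟩
    _ = v * ∑ y ∈ Y, (#{k ∈ range N | y ∈ A k} : ℝ≥0∞) * ENNReal.ofReal ε := by
        have hdouble : ∑ k ∈ range N, (#{y ∈ Y | y ∈ A k} : ℝ≥0∞) =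
            ∑ y ∈ Y, (#{k ∈ range N | y ∈ A k} : ℝ≥0∞) := by
          exact_mod_cast sum_card_bipartiteAbove_eq_sum_card_bipartiteBelow (fun k y => y ∈ A k)
        rw [← sum_mul, ← hdouble, sum_mul, mul_sum]
        exact sum_congr rfl fun k _ => by ring
    _ ≤ v * ∑ y ∈ Y, ENNReal.ofReal (f y) := by gcongr with y hy; exact hcount y hy
    _ ≤ v * sepSup f := by gcongr; exact sum_le_sepSup hY

theorem _root_.Antitone.setLIntegral_Ioi_le_tsum {φ : ℝ → ℝ≥0∞} (hφ : Antitone φ) {ε : ℝ}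
    (hε : 0 < ε) :
    ∫⁻ t in Set.Ioi ε, φ t ≤ ∑' k : ℕ, ENNReal.ofReal ε * φ ((k + 1) * ε) := by
  have hcover : Set.Ioi ε ⊆ ⋃ k : ℕ, Set.Ico ((k + 1) * ε) ((k + 2) * ε) := by
    intro t (ht : ε < t)
    obtain ⟨k, hk⟩ : ∃ k : ℕ, ⌊t / ε⌋₊ = k + 1 :=
      Nat.exists_eq_add_one.2 (Nat.floor_pos.2 ((one_le_div hε).2 ht.le))
    have hlow := Nat.floor_le (div_nonneg (hε.trans ht).le hε.le)
    have hhigh := Nat.lt_floor_add_one (t / ε)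
    rw [hk] at hlow hhigh
    push_cast at hlow hhigh
    refine Set.mem_iUnion.2 ⟨k, (le_div_iff₀ hε).1 hlow, ?_⟩
    rw [div_lt_iff₀ hε] at hhigh
    linarith
  calc ∫⁻ t in Set.Ioi ε, φ t
      ≤ ∫⁻ t in ⋃ k : ℕ, Set.Ico ((k + 1) * ε) ((k + 2) * ε), φ t := lintegral_mono_set hcover
    _ ≤ ∑' k : ℕ, ∫⁻ t in Set.Ico ((k + 1) * ε) ((k + 2) * ε), φ t := lintegral_iUnion_le _ _
    _ ≤ ∑' k : ℕ, ∫⁻ _t in Set.Ico ((k + 1) * ε) ((k + 2) * ε), φ ((k + 1) * ε) :=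
        ENNReal.tsum_le_tsum fun k => setLIntegral_mono' measurableSet_Ico fun t ht => hφ ht.1
    _ = ∑' k : ℕ, ENNReal.ofReal ε * φ ((k + 1) * ε) := by
        refine tsum_congr fun k => ?_
        rw [setLIntegral_const, Real.volume_Ico, mul_comm]
        congr 2
        ring

theorem lintegral_le_mul_sepSup (hball : ∀ x, μ (ball x 1) ≤ v) {f : E → ℝ} (hf₀ : 0 ≤ f)
    (hf : AEMeasurable f μ) (hS : sepSup f ≠ ⊤) :
    ∫⁻ x, ENNReal.ofReal (f x) ∂μ ≤ v * sepSup f := by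
  have hφ : Antitone fun t : ℝ => μ {x | t < f x} := fun s t hst =>
    measure_mono fun x (hx : t < f x) => hst.trans_lt hx
  have hIoi : Set.Ioi (0 : ℝ) = ⋃ n : ℕ, Set.Ioi (1 / (n + 1 : ℝ)) := by
    ext t
    simp only [Set.mem_Ioi, Set.mem_iUnion]
    exact ⟨exists_nat_one_div_lt, fun ⟨n, hn⟩ => (by positivity : (0 : ℝ) < 1 / (n + 1)).trans hn⟩
  have hdir : Monotone fun n : ℕ => Set.Ioi (1 / (n + 1 : ℝ)) := fun m n hmn =>
    Set.Ioi_subset_Ioi (Nat.one_div_le_one_div hmn)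
  rw [lintegral_eq_lintegral_meas_lt μ (ae_of_all _ hf₀) hf, hIoi,
    setLIntegral_iUnion_of_directed _ hdir.directed_le]
  refine iSup_le fun n => ?_
  calc ∫⁻ t in Set.Ioi (1 / (n + 1 : ℝ)), μ {x | t < f x}
      ≤ ∑' k : ℕ, ENNReal.ofReal (1 / (n + 1)) * μ {x | (k + 1) * (1 / (n + 1 : ℝ)) < f x} :=
        hφ.setLIntegral_Ioi_le_tsum (by positivity)
    _ = ⨆ N : ℕ, ∑ k ∈ range N,
          ENNReal.ofReal (1 / (n + 1)) * μ {x | (k + 1) * (1 / (n + 1 : ℝ)) < f x} :=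
        ENNReal.tsum_eq_iSup_nat
    _ ≤ v * sepSup f := iSup_le (sum_measure_superlevel_le hball hS (by positivity))

end SeparatedSum

/-- For measurable `f : ℝ^d → ℝ`,
`∫ |f| ≤ Vol(B₁) · sup_{X ∈ C} ∑_{x ∈ X} |f x|`, where `C` is the class of
finite subsets of `ℝ^d` whose points are pairwise at distance ≥ 1.
The supremum (possibly `+∞`) is taken in `ℝ≥0∞`. -/
theorem stmt_0 (d : ℕ) (f : EuclideanSpace ℝ (Fin d) → ℝ) (hf : Measurable f) :
    ∫⁻ x, ENNReal.ofReal |f x| ≤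
      volume (ball (0 : EuclideanSpace ℝ (Fin d)) 1) *
        ⨆ (X : Finset (EuclideanSpace ℝ (Fin d)))
          (_ : ∀ x ∈ X, ∀ y ∈ X, x ≠ y → 1 ≤ dist x y),
          ∑ x ∈ X, ENNReal.ofReal |f x| := by
  change _ ≤ _ * SeparatedSum.sepSup fun x => |f x|
  rcases eq_or_ne (SeparatedSum.sepSup fun x => |f x|) ⊤ with hS | hS
  · rw [hS, mul_top (measure_ball_pos volume 0 one_pos).ne']
    exact le_top
  · exact SeparatedSum.lintegral_le_mul_sepSup
      (fun x => (Measure.addHaar_ball_center volume x 1).le) (fun x => abs_nonneg (f x))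
      hf.abs.aemeasurable hS
end

section
/- Let f : ℝ^d → ℝ be measurable. Then ∫_{ℝ^d \ B₁} |f(x)| dx ≤ Vol(B₁) · sup over all finite sets X ⊂ ℝ^d \ B₁ whose points are pairwise separated by distance ≥ 1 of ∑_{x ∈ X} |f(x)|. -/
/-!
Approximate the integrand from below by simple functions. For a function `φ` with finitely many
values, treating the values from the largest down and extending a maximal `1`-separated set at each
level gives a single `1`-separated set `X` such that every point `a` of the support of `φ` lies
within distance `< 1` of some `x ∈ X` with `φ a ≤ φ x`. Each superlevel set `{t < φ}` is then
covered by the unit balls around the points of `X` in it, so its volume is at most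
`Vol(B₁) · #(X ∩ {t < φ})`; integrating in `t` (layer cake, once for Lebesgue measure and once for
the counting measure on `X`) gives `∫ φ ≤ Vol(B₁) · ∑_{x ∈ X} φ x`.
-/

open MeasureTheory Metric Set
open scoped ENNReal

section Separated

variable {α : Type*} [PseudoMetricSpace α] {r : ℝ}

theorem exists_superset_pairwise_le_dist_covering (hr : 0 < r) {X U : Set α} (hXU : X ⊆ U)
    (hX : X.Pairwise (r ≤ dist · ·)) :
    ∃ Y, X ⊆ Y ∧ Y ⊆ U ∧ Y.Pairwise (r ≤ dist · ·) ∧ ∀ b ∈ U, ∃ y ∈ Y, dist b y < r := by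
  obtain ⟨Y, hXY, hYmax⟩ := zorn_subset_nonempty {Y | Y ⊆ U ∧ Y.Pairwise (r ≤ dist · ·)}
    (fun c hc hchain _ => ⟨⋃₀ c, ⟨sUnion_subset fun s hs => (hc hs).1,
      hchain.pairwise_sUnion.2 fun s hs => (hc hs).2⟩, fun _ => subset_sUnion_of_mem⟩)
    X ⟨hXU, hX⟩
  obtain ⟨hYU, hYsep⟩ := hYmax.prop
  refine ⟨Y, hXY, hYU, hYsep, fun b hb => ?_⟩
  by_contra! hfar
  have hbY : b ∈ Y := hYmax.mem_of_prop_insert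
    ⟨insert_subset hb hYU, hYsep.insert fun y hy _ => ⟨hfar y hy, dist_comm b y ▸ hfar y hy⟩⟩
  linarith [hfar b hbY, dist_self b]

theorem exists_pairwise_le_dist_dominating {β : Type*} [LinearOrder β] (hr : 0 < r) (φ : α → β)
    (S : Set α) (T : Finset β) :
    ∃ X ⊆ S ∩ φ ⁻¹' T, X.Pairwise (r ≤ dist · ·) ∧
      ∀ a ∈ S ∩ φ ⁻¹' T, ∃ x ∈ X, dist a x < r ∧ φ a ≤ φ x := by
  induction T using Finset.induction_on_min with
  | empty => exact ⟨∅, empty_subset _, pairwise_empty _, by simp⟩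
  | insert t T ht ih =>
    obtain ⟨X, hXsub, hXsep, hXdom⟩ := ih
    obtain ⟨Y, hXY, hYU, hYsep, hYcov⟩ :=
      exists_superset_pairwise_le_dist_covering hr (U := X ∪ S ∩ φ ⁻¹' {t}) subset_union_left hXsep
    have hYsub : Y ⊆ S ∩ φ ⁻¹' ↑(insert t T) := by
      refine hYU.trans (union_subset (hXsub.trans ?_) ?_) <;> intro x ⟨hxS, hx⟩ <;> simp_all
    refine ⟨Y, hYsub, hYsep, fun a ⟨haS, ha⟩ => ?_⟩
    rcases Finset.mem_insert.1 ha with hat | haT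
    · obtain ⟨y, hy, hay⟩ := hYcov a (Or.inr ⟨haS, hat⟩)
      refine ⟨y, hy, hay, hat ▸ ?_⟩
      rcases Finset.mem_insert.1 (hYsub hy).2 with hyt | hyT
      · exact hyt.ge
      · exact (ht _ hyT).le
    · obtain ⟨x, hx, hax, hle⟩ := hXdom a ⟨haS, haT⟩
      exact ⟨x, hXY hx, hax, hle⟩

end Separated

theorem ENNReal.tsum_subtype_le_iSup_sum {α : Type*} (X : Set α) (h : α → ℝ≥0∞) :
    ∑' x : X, h x ≤ ⨆ (F : Finset α) (_ : ↑F ⊆ X), ∑ x ∈ F, h x := by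
  rw [ENNReal.tsum_eq_iSup_sum]
  refine iSup_le fun s => le_iSup₂_of_le (s.map (Function.Embedding.subtype _)) (by simp) ?_
  rw [Finset.sum_map]
  rfl

namespace MeasureTheory

theorem Measure.sum_dirac_apply_eq_encard {α : Type*} [MeasurableSpace α] {X S : Set α}
    (hS : MeasurableSet S) :
    Measure.sum (fun x : X => Measure.dirac (x : α)) S = (X ∩ S).encard := by
  simp only [Measure.sum_apply _ hS, Measure.dirac_apply' _ hS, ← ENNReal.tsum_set_one]
  rw [tsum_subtype X (S.indicator 1), tsum_subtype (X ∩ S) fun _ => 1, indicator_indicator]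
  rfl

section AddHaar

variable {E : Type*} [NormedAddCommGroup E] [MeasurableSpace E] [BorelSpace E]
  (μ : Measure E) [μ.IsAddHaarMeasure] {r : ℝ}

theorem measure_le_encard_mul_measure_ball (hr : 0 < r) {S Y : Set E}
    (hS : S ⊆ ⋃ y ∈ Y, ball y r) : μ S ≤ Y.encard * μ (ball 0 r) := by
  rcases Y.finite_or_infinite with hY | hY
  · calc μ S ≤ μ (⋃ y ∈ hY.toFinset, ball y r) := measure_mono (by simpa using hS)
      _ ≤ ∑ y ∈ hY.toFinset, μ (ball y r) := measure_biUnion_finset_le _ _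
      _ = Y.encard * μ (ball 0 r) := by
        simp [Measure.addHaar_ball_center, hY.encard_eq_coe_toFinset_card]
  · rw [hY.encard_eq, ENat.toENNReal_top, ENNReal.top_mul (measure_ball_pos μ 0 hr).ne']
    exact le_top

variable [ProperSpace E]

theorem lintegral_le_measure_ball_mul_tsum {φ : E → ℝ≥0∞} (hφ : Measurable φ)
    (hφ_top : ∀ a, φ a ≠ ∞) (hr : 0 < r) {X : Set E}
    (hdom : ∀ a, φ a ≠ 0 → ∃ x ∈ X, dist a x < r ∧ φ a ≤ φ x) :
    ∫⁻ a, φ a ∂μ ≤ μ (ball 0 r) * ∑' x : X, φ x := by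
  set ν := Measure.sum fun x : X => Measure.dirac (x : E)
  have layer_cake (ρ : Measure E) : ∫⁻ a, φ a ∂ρ = ∫⁻ t in Ioi 0, ρ {a | t < (φ a).toReal} := by
    simpa only [ENNReal.ofReal_toReal (hφ_top _)] using lintegral_eq_lintegral_meas_lt ρ
      (ae_of_all _ fun a => ENNReal.toReal_nonneg) hφ.ennreal_toReal.aemeasurable
  have hlevel (t : ℝ) (ht : t ∈ Ioi 0) :
      μ {a | t < (φ a).toReal} ≤ μ (ball 0 r) * ν {a | t < (φ a).toReal} := by
    rw [Measure.sum_dirac_apply_eq_encard (measurableSet_lt measurable_const hφ.ennreal_toReal),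
      mul_comm]
    refine measure_le_encard_mul_measure_ball μ hr fun a (ha : t < (φ a).toReal) => ?_
    have hφa : φ a ≠ 0 := by
      rintro h
      rw [h, ENNReal.toReal_zero] at ha
      exact lt_asymm ht ha
    obtain ⟨x, hx, hax, hle⟩ := hdom a hφa
    exact mem_biUnion ⟨hx, ha.trans_le (ENNReal.toReal_mono (hφ_top x) hle)⟩ (mem_ball.2 hax)
  calc ∫⁻ a, φ a ∂μ = ∫⁻ t in Ioi 0, μ {a | t < (φ a).toReal} := layer_cake μ
    _ ≤ ∫⁻ t in Ioi 0, μ (ball 0 r) * ν {a | t < (φ a).toReal} :=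
      setLIntegral_mono' measurableSet_Ioi hlevel
    _ = μ (ball 0 r) * ∫⁻ a, φ a ∂ν := by
      rw [lintegral_const_mul' _ _ measure_ball_lt_top.ne, layer_cake ν]
    _ = μ (ball 0 r) * ∑' x : X, φ x := by
      simp only [ν, lintegral_sum_measure, lintegral_dirac]

theorem SimpleFunc.lintegral_le_measure_ball_mul_iSup_sum (φ : SimpleFunc E ℝ≥0∞)
    (hφ_top : ∀ a, φ a ≠ ∞) (hr : 0 < r) {S : Set E} (hS : ∀ a, φ a ≠ 0 → a ∈ S) :
    φ.lintegral μ ≤ μ (ball 0 r) * ⨆ (X : Finset E)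
      (_ : ↑X ⊆ S ∧ (X : Set E).Pairwise (r ≤ dist · ·)), ∑ x ∈ X, φ x := by
  obtain ⟨X, hXS, hXsep, hXdom⟩ := exists_pairwise_le_dist_dominating hr φ S φ.range
  rw [← φ.lintegral_eq_lintegral]
  refine (lintegral_le_measure_ball_mul_tsum μ φ.measurable hφ_top hr fun a ha =>
    hXdom a ⟨hS a ha, by simp⟩).trans (mul_le_mul_right ?_ _)
  refine (ENNReal.tsum_subtype_le_iSup_sum X φ).trans (iSup₂_le fun F hF => ?_)
  exact le_iSup₂_of_le F ⟨hF.trans fun x hx => (hXS hx).1, hXsep.mono hF⟩ le_rfl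

end AddHaar

end MeasureTheory

theorem stmt_1_general (d : ℕ) (f : EuclideanSpace ℝ (Fin d) → ℝ) :
    ∫⁻ x in (ball (0 : EuclideanSpace ℝ (Fin d)) 1)ᶜ, ENNReal.ofReal |f x| ≤
      volume (ball (0 : EuclideanSpace ℝ (Fin d)) 1) *
        ⨆ (X : Finset (EuclideanSpace ℝ (Fin d)))
          (_ : ↑X ⊆ (ball (0 : EuclideanSpace ℝ (Fin d)) 1)ᶜ ∧
            ∀ x ∈ X, ∀ y ∈ X, x ≠ y → 1 ≤ dist x y),
          ∑ x ∈ X, ENNReal.ofReal |f x| := by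
  set A := (ball (0 : EuclideanSpace ℝ (Fin d)) 1)ᶜ
  rw [← lintegral_indicator measurableSet_ball.compl, lintegral_def]
  refine iSup₂_le fun φ hφ => ?_
  have hφ_le (a : EuclideanSpace ℝ (Fin d)) : φ a ≤ ENNReal.ofReal |f a| :=
    (hφ a).trans (indicator_le_self _ _ a)
  have hφA (a) (ha : φ a ≠ 0) : a ∈ A := by
    by_contra h
    exact ha (le_antisymm ((hφ a).trans_eq (indicator_of_notMem h _)) bot_le)
  refine (φ.lintegral_le_measure_ball_mul_iSup_sum volume
    (fun a => ne_top_of_le_ne_top ENNReal.ofReal_ne_top (hφ_le a)) one_pos hφA).trans ?_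
  gcongr
  exact iSup_mono fun _ => Finset.sum_le_sum fun x _ => hφ_le x

/-- For measurable `f : ℝ^d → ℝ`,
`∫_{ℝ^d \ B₁} |f| ≤ Vol(B₁) · sup_{X ∈ C₀} ∑_{x ∈ X} |f x|`, where `C₀` is the
class of finite subsets of `ℝ^d \ B₁` whose points are pairwise at distance ≥ 1. -/
theorem stmt_1 (d : ℕ) (f : EuclideanSpace ℝ (Fin d) → ℝ) (hf : Measurable f) :
    ∫⁻ x in (ball (0 : EuclideanSpace ℝ (Fin d)) 1)ᶜ, ENNReal.ofReal |f x| ≤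
      volume (ball (0 : EuclideanSpace ℝ (Fin d)) 1) *
        ⨆ (X : Finset (EuclideanSpace ℝ (Fin d)))
          (_ : ↑X ⊆ (ball (0 : EuclideanSpace ℝ (Fin d)) 1)ᶜ ∧
            ∀ x ∈ X, ∀ y ∈ X, x ≠ y → 1 ≤ dist x y),
          ∑ x ∈ X, ENNReal.ofReal |f x| :=
  stmt_1_general d f
end

section
/- Suppose g : ℝ^d → ℝ satisfies: g(x) = g(-x), g(x) ≥ -a > -1 for |x| ≥ 1, g(x) = -1 for |x| < 1, and sup_{X ∈ C₀} ∑_{x ∈ X} |g(x)| ≤ c < ∞. Then the hard core potential Φ(x) = -ln(g(x)+1) is stable: for all n and all x₁,…,xₙ ∈ ℝ^d, U(x₁,…,xₙ) = ∑_{1≤i<j≤n} Φ(xᵢ - xⱼ) ≥ -(c/2)·n. -/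
/-!
Since `g ≥ -a > -1` on separated configurations, `-log (1 + g) ≥ -g ≥ -|g|`, so it suffices to
bound `∑_{i<j} |g (xᵢ - xⱼ)|` by `c n / 2`. By evenness of `g` this is half the sum over ordered
pairs `i ≠ j`, and for each fixed `i` the differences `xᵢ - xⱼ`, `j ≠ i`, again form a
configuration in `C₀` (`dist (xᵢ - xⱼ) (xᵢ - xₖ) = dist xⱼ xₖ`), whose `|g|`-sum is at most `c`.
-/

open Finset in
theorem Finset.two_nsmul_sum_filter_lt_of_swap {ι M : Type*} [LinearOrder ι] [Fintype ι]
    [AddCommMonoid M] {f : ι × ι → M} (hf : ∀ p, f p.swap = f p) :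
    2 • ∑ p ∈ univ.filter (fun p : ι × ι => p.1 < p.2), f p =
      ∑ i, ∑ j ∈ univ.erase i, f (i, j) := by
  have hswap : ∑ p ∈ univ.filter (fun p : ι × ι => p.2 < p.1), f p =
      ∑ p ∈ univ.filter (fun p : ι × ι => p.1 < p.2), f p :=
    sum_equiv (Equiv.prodComm ι ι) (by simp) (fun p _ => (hf p).symm)
  have hsplit : ∑ p ∈ univ.filter (fun p : ι × ι => p.1 ≠ p.2), f p =
      ∑ p ∈ univ.filter (fun p : ι × ι => p.1 < p.2), f p +
        ∑ p ∈ univ.filter (fun p : ι × ι => p.2 < p.1), f p := by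
    rw [← sum_filter_add_sum_filter_not _ (fun p : ι × ι => p.1 < p.2), filter_filter,
      filter_filter]
    congr 2 <;> ext p <;> simp only [mem_filter, mem_univ, true_and] <;> grind
  rw [two_nsmul]
  nth_rw 2 [← hswap]
  rw [← hsplit, sum_filter, Fintype.sum_prod_type]
  refine sum_congr rfl fun i _ => ?_
  rw [← sum_filter, filter_ne]

theorem sum_sub_le_of_separated {E : Type*} [SeminormedAddCommGroup E] {φ : E → ℝ}
    {r c : ℝ} (hr : 0 < r) (hsum : ∀ X : Finset E, (∀ x ∈ X, r ≤ ‖x‖) →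
      (∀ x ∈ X, ∀ y ∈ X, x ≠ y → r ≤ dist x y) → ∑ x ∈ X, φ x ≤ c)
    {ι : Type*} [Fintype ι] [DecidableEq ι] {x : ι → E}
    (hx : ∀ i j, i ≠ j → r ≤ dist (x i) (x j)) (i : ι) :
    ∑ j ∈ Finset.univ.erase i, φ (x i - x j) ≤ c := by
  classical
  have hinj : Set.InjOn (fun j => x i - x j) (Finset.univ.erase i) := by
    intro j _ k _ hjk
    by_contra hne
    have := hx j k hne
    rw [sub_right_inj.mp hjk, dist_self] at this
    exact this.not_gt hr
  rw [← Finset.sum_image hinj]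
  apply hsum
  · simp only [Finset.mem_image, Finset.mem_erase]
    rintro _ ⟨j, ⟨hji, -⟩, rfl⟩
    simpa [dist_eq_norm] using hx i j (Ne.symm hji)
  · simp only [Finset.mem_image, Finset.mem_erase]
    rintro _ ⟨j, -, rfl⟩ _ ⟨k, -, rfl⟩ hjk
    rw [dist_sub_left, dist_comm]
    exact hx k j fun h => hjk (h ▸ rfl)

theorem Real.neg_abs_le_neg_log_add_one {t : ℝ} (ht : -1 < t) : -|t| ≤ -Real.log (t + 1) := by
  have := Real.log_le_sub_one_of_pos (show 0 < t + 1 by linarith)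
  linarith [le_abs_self t]

theorem stmt_2_general (d : ℕ) (g : EuclideanSpace ℝ (Fin d) → ℝ) (a c : ℝ)
    (ha : a < 1)
    (heven : ∀ x, g (-x) = g x)
    (hge : ∀ x, 1 ≤ ‖x‖ → -a ≤ g x)
    (hsum : ∀ X : Finset (EuclideanSpace ℝ (Fin d)),
      (∀ x ∈ X, 1 ≤ ‖x‖) → (∀ x ∈ X, ∀ y ∈ X, x ≠ y → 1 ≤ dist x y) →
      ∑ x ∈ X, |g x| ≤ c)
    (n : ℕ) (x : Fin n → EuclideanSpace ℝ (Fin d))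
    (hx : ∀ i j, i ≠ j → 1 ≤ dist (x i) (x j)) :
    -(c / 2) * n ≤
      ∑ p ∈ Finset.univ.filter (fun p : Fin n × Fin n => p.1 < p.2),
        (-Real.log (g (x p.1 - x p.2) + 1)) := by
  set S := Finset.univ.filter (fun p : Fin n × Fin n => p.1 < p.2)
  have hswap : ∀ p : Fin n × Fin n, |g (x p.swap.1 - x p.swap.2)| = |g (x p.1 - x p.2)| :=
    fun p => by rw [Prod.fst_swap, Prod.snd_swap, ← neg_sub, heven]
  have hpairs : 2 * ∑ p ∈ S, |g (x p.1 - x p.2)| ≤ c * n := by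
    rw [two_mul, ← two_nsmul, Finset.two_nsmul_sum_filter_lt_of_swap hswap]
    calc ∑ i, ∑ j ∈ Finset.univ.erase i, |g (x i - x j)|
        ≤ ∑ _i : Fin n, c := Finset.sum_le_sum fun i _ =>
          sum_sub_le_of_separated one_pos hsum hx i
      _ = c * n := by simp [mul_comm]
  have hlog : ∀ p ∈ S, -|g (x p.1 - x p.2)| ≤ -Real.log (g (x p.1 - x p.2) + 1) := by
    intro p hp
    have hsep := hx p.1 p.2 (Finset.mem_filter.mp hp).2.ne
    rw [dist_eq_norm] at hsep
    exact Real.neg_abs_le_neg_log_add_one (by linarith [hge _ hsep])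
  calc -(c / 2) * n ≤ ∑ p ∈ S, -|g (x p.1 - x p.2)| := by
        rw [Finset.sum_neg_distrib]; linarith
    _ ≤ _ := Finset.sum_le_sum hlog

/-- Under the hard-core assumptions on `g` (with `g(x) = e^{-Φ(x)} - 1`),
the potential `Φ(x) = -ln(g x + 1)` is stable: for configurations whose points are
pairwise at distance ≥ 1, `U(x₁,…,xₙ) = ∑_{i<j} Φ(xᵢ-xⱼ) ≥ -(c/2)·n`.
(Configurations with some pair at distance < 1 have `U = +∞` and trivially satisfy
the bound, so only 1-separated configurations need be considered.) -/
theorem stmt_2 (d : ℕ) (g : EuclideanSpace ℝ (Fin d) → ℝ) (a c : ℝ)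
    (ha : a < 1)
    (heven : ∀ x, g (-x) = g x)
    (hge : ∀ x, 1 ≤ ‖x‖ → -a ≤ g x)
    (hcore : ∀ x, ‖x‖ < 1 → g x = -1)
    (hsum : ∀ X : Finset (EuclideanSpace ℝ (Fin d)),
      (∀ x ∈ X, 1 ≤ ‖x‖) → (∀ x ∈ X, ∀ y ∈ X, x ≠ y → 1 ≤ dist x y) →
      ∑ x ∈ X, |g x| ≤ c)
    (n : ℕ) (x : Fin n → EuclideanSpace ℝ (Fin d))
    (hx : ∀ i j, i ≠ j → 1 ≤ dist (x i) (x j)) :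
    -(c / 2) * n ≤
      ∑ p ∈ Finset.univ.filter (fun p : Fin n × Fin n => p.1 < p.2),
        (-Real.log (g (x p.1 - x p.2) + 1)) :=
  stmt_2_general d g a c ha heven hge hsum n x hx
end

section
/- Suppose g : ℝ^d → ℝ satisfies g(x) = -1 for |x| < 1 and sup_{X ∈ C₀} ∑_{x ∈ X} |g(x)| ≤ c < ∞. Then the potential Φ(x) = -ln(g(x)+1) is regular: ∫_{ℝ^d} |e^{-Φ(x)} - 1| dx < ∞. -/
/-!
Tile `ℝ^d` by the translates of the half-open unit cube under the lattice `ℤ^d`. Unfolding the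
integral of `|g|` outside the unit ball over the tiles turns it into the integral over one cube of
the sums of `|g|` along `ℤ^d`-orbits. Distinct points of an orbit are at distance at least `1`, so
each such sum is at most `c`, and the integral at most `c` times the volume of the cube.
-/

open Metric MeasureTheory Set Submodule

theorem MeasureTheory.IsAddFundamentalDomain.lintegral_le_mul_of_sum_vadd_le
    {G α : Type*} [AddGroup G] [Countable G] [AddAction G α] [MeasurableSpace α]
    [MeasurableConstVAdd G α] {μ : Measure α} [VAddInvariantMeasure G α μ] {s : Set α}
    (h : IsAddFundamentalDomain G s μ) {F : α → ENNReal} (hF : Measurable F) {C : ENNReal}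
    (hC : ∀ x (T : Finset G), ∑ g ∈ T, F (g +ᵥ x) ≤ C) :
    ∫⁻ x, F x ∂μ ≤ C * μ s :=
  calc ∫⁻ x, F x ∂μ = ∑' g : G, ∫⁻ x in s, F (g +ᵥ x) ∂μ := h.lintegral_eq_tsum'' F
    _ = ∫⁻ x in s, ∑' g : G, F (g +ᵥ x) ∂μ :=
      (lintegral_tsum fun g => (hF.comp (measurable_const_vadd g)).aemeasurable).symm
    _ ≤ ∫⁻ _ in s, C ∂μ := lintegral_mono fun x => ENNReal.summable.tsum_le_of_sum_le (hC x)
    _ = C * μ s := setLIntegral_const s C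

abbrev EuclideanSpace.intLattice (ι : Type*) [Fintype ι] : AddSubgroup (EuclideanSpace ℝ ι) :=
  (span ℤ (range (EuclideanSpace.basisFun ι ℝ).toBasis)).toAddSubgroup

namespace EuclideanSpace.intLattice

variable {ι : Type*} [Fintype ι]

instance : Countable (intLattice ι) :=
  inferInstanceAs (Countable (span ℤ (range (EuclideanSpace.basisFun ι ℝ).toBasis)))

theorem isAddFundamentalDomain (μ : Measure (EuclideanSpace ℝ ι)) :
    IsAddFundamentalDomain (intLattice ι)
      (ZSpan.fundamentalDomain (EuclideanSpace.basisFun ι ℝ).toBasis) μ :=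
  ZSpan.isAddFundamentalDomain' _ μ

theorem one_le_norm {v : EuclideanSpace ℝ ι} (hv : v ∈ intLattice ι) (h0 : v ≠ 0) :
    1 ≤ ‖v‖ := by
  obtain ⟨i, hi⟩ : ∃ i, v i ≠ 0 := by
    by_contra! h
    exact h0 (by ext i; simp [h i])
  obtain ⟨n, hn⟩ := (Module.Basis.mem_span_iff_repr_mem ℤ _ v).mp hv i
  simp only [eq_intCast, OrthonormalBasis.coe_toBasis_repr_apply,
    EuclideanSpace.basisFun_repr] at hn
  rw [← hn, Int.cast_ne_zero] at hi
  calc (1 : ℝ) ≤ |(n : ℝ)| := by exact_mod_cast Int.one_le_abs hi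
    _ = ‖v i‖ := by rw [← hn, Real.norm_eq_abs]
    _ ≤ ‖v‖ := PiLp.norm_apply_le v i

theorem sum_indicator_vadd_le {g : EuclideanSpace ℝ ι → ℝ} {c : ℝ}
    (hsum : ∀ X : Finset (EuclideanSpace ℝ ι),
      (∀ x ∈ X, 1 ≤ ‖x‖) → (∀ x ∈ X, ∀ y ∈ X, x ≠ y → 1 ≤ dist x y) →
      ∑ x ∈ X, |g x| ≤ c) (x : EuclideanSpace ℝ ι) (T : Finset (intLattice ι)) :
    ∑ v ∈ T, (ball 0 1)ᶜ.indicator (fun y => ‖g y‖ₑ) (v +ᵥ x) ≤ ENNReal.ofReal c := by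
  classical
  set X := (T.image (· +ᵥ x)).filter (fun y => 1 ≤ ‖y‖)
  have hinj : InjOn (· +ᵥ x) (T : Set (intLattice ι)) :=
    fun v _ w _ h => Subtype.ext (add_right_cancel h)
  have hsep : ∀ y ∈ X, ∀ y' ∈ X, y ≠ y' → 1 ≤ dist y y' := by
    intro y hy y' hy' hne
    obtain ⟨v, -, rfl⟩ := Finset.mem_image.mp (Finset.mem_filter.mp hy).1
    obtain ⟨w, -, rfl⟩ := Finset.mem_image.mp (Finset.mem_filter.mp hy').1
    rw [AddSubgroup.vadd_def, AddSubgroup.vadd_def, vadd_eq_add, vadd_eq_add, dist_add_right,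
      dist_eq_norm]
    exact one_le_norm (sub_mem v.2 w.2) (sub_ne_zero.mpr fun h => hne (by rw [Subtype.ext h]))
  calc ∑ v ∈ T, (ball 0 1)ᶜ.indicator (fun y => ‖g y‖ₑ) (v +ᵥ x)
      = ∑ y ∈ T.image (· +ᵥ x), (ball 0 1)ᶜ.indicator (fun y => ‖g y‖ₑ) y :=
        (Finset.sum_image hinj).symm
    _ = ∑ y ∈ X, ‖g y‖ₑ := by
        rw [Finset.sum_filter]
        simp only [indicator_apply, mem_compl_iff, mem_ball_zero_iff, not_lt]
    _ = ENNReal.ofReal (∑ y ∈ X, |g y|) := by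
        rw [ENNReal.ofReal_sum_of_nonneg fun y _ => abs_nonneg _]
        simp only [Real.enorm_eq_ofReal_abs]
    _ ≤ ENNReal.ofReal c :=
        ENNReal.ofReal_le_ofReal (hsum X (fun y hy => (Finset.mem_filter.mp hy).2) hsep)

end EuclideanSpace.intLattice

/-- Under the hard-core assumptions, the potential `Φ = -ln(g+1)` is
regular: `∫_{ℝ^d} |e^{-Φ(x)} - 1| dx < ∞`.  Since `e^{-Φ(x)} - 1 = g x`
(including on the core, where `e^{-∞} - 1 = -1 = g x`), regularity is exactly the
integrability of `g`. -/
theorem stmt_3 (d : ℕ) (g : EuclideanSpace ℝ (Fin d) → ℝ) (c : ℝ)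
    (hg : Measurable g)
    (hcore : ∀ x, ‖x‖ < 1 → g x = -1)
    (hsum : ∀ X : Finset (EuclideanSpace ℝ (Fin d)),
      (∀ x ∈ X, 1 ≤ ‖x‖) → (∀ x ∈ X, ∀ y ∈ X, x ≠ y → 1 ≤ dist x y) →
      ∑ x ∈ X, |g x| ≤ c) :
    Integrable g volume := by
  have h_in : IntegrableOn g (ball 0 1) :=
    (integrableOn_const measure_ball_lt_top.ne).congr_fun
      (fun x hx => (hcore x (mem_ball_zero_iff.mp hx)).symm) measurableSet_ball
  have h_out : IntegrableOn g (ball 0 1)ᶜ := by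
    refine ⟨hg.aestronglyMeasurable, ?_⟩
    rw [HasFiniteIntegral, ← lintegral_indicator measurableSet_ball.compl]
    calc _ ≤ ENNReal.ofReal c *
          volume (ZSpan.fundamentalDomain (EuclideanSpace.basisFun (Fin d) ℝ).toBasis) :=
          (EuclideanSpace.intLattice.isAddFundamentalDomain volume).lintegral_le_mul_of_sum_vadd_le
            (hg.enorm.indicator measurableSet_ball.compl)
            (EuclideanSpace.intLattice.sum_indicator_vadd_le hsum)
      _ < ⊤ := ENNReal.mul_lt_top ENNReal.ofReal_lt_top
          (ZSpan.fundamentalDomain_isBounded _).measure_lt_top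
  simpa using h_in.union h_out
end

section
/- Define φ̃_X = ψ⁻¹ ∗ D_X ψ where ψ is the sequence of Boltzmann factors ψₘ(x₁,…,xₘ) = e^{-U(x₁,…,xₘ)} (ψ₀ = 1), D_X the shift operator (D_X ψ)ₙ(y₁,…,yₙ) = ψ_{|X|+n}(X, y₁,…,yₙ), and ψ⁻¹ the ∗-inverse of ψ. Then for a single point x₁: φ̃_{(x₁)}(y₁,…,yₙ) = φ_{1+n}(x₁,y₁,…,yₙ), where φ = Γ⁻¹ψ is the sequence of Ursell functions. -/
open Finset

noncomputable section

abbrev SeqFun (d : ℕ) := (n : ℕ) → (Fin n → EuclideanSpace ℝ (Fin d)) → ℝ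

def subseqVals {d n : ℕ} (X : Fin n → EuclideanSpace ℝ (Fin d)) (S : Finset (Fin n)) :
    Fin S.card → EuclideanSpace ℝ (Fin d) :=
  fun i => X ((S.orderIsoOfFin rfl i : Fin n))

def conv {d : ℕ} (f g : SeqFun d) : SeqFun d := fun n X =>
  ∑ S : Finset (Fin n), f S.card (subseqVals X S) * g Sᶜ.card (subseqVals X Sᶜ)

def oneSeq (d : ℕ) : SeqFun d := fun n _ => if n = 0 then 1 else 0

def convPow {d : ℕ} (f : SeqFun d) : ℕ → SeqFun d
  | 0 => oneSeq d
  | k + 1 => conv f (convPow f k)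

/-- `Γ⁻¹(𝟏 + φ')`, acting on the `A₊`-part `φ'` (terminating series). -/
def GammaInv {d : ℕ} (f : SeqFun d) : SeqFun d := fun n X =>
  ∑ k ∈ Finset.Icc 1 n, ((-1 : ℝ)) ^ (k + 1) / (k : ℝ) * convPow f k n X

/-- Total energy `U(x₁,…,xₙ) = ∑_{i<j} Φ(xᵢ - xⱼ)`. -/
def energy {d n : ℕ} (Φ : EuclideanSpace ℝ (Fin d) → ℝ)
    (X : Fin n → EuclideanSpace ℝ (Fin d)) : ℝ :=
  ∑ p ∈ Finset.univ.filter (fun p : Fin n × Fin n => p.1 < p.2), Φ (X p.1 - X p.2)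

/-- The sequence of Boltzmann factors `ψₘ(x₁,…,xₘ) = e^{-U(x₁,…,xₘ)}` (`ψ₀ = 1`). -/
def boltzmann {d : ℕ} (Φ : EuclideanSpace ℝ (Fin d) → ℝ) : SeqFun d :=
  fun _ X => Real.exp (-energy Φ X)

/-!
Evaluating sequences on the sub-configurations of the configuration `X = (x₁, y₁, …, yₙ)` turns
`∗` into the subset convolution on `Finset (Fin (n + 1))`, a commutative algebra in which every
element vanishing at `∅` is nilpotent; so `Γ⁻¹ψ` becomes the terminating series `log (1 + u)`
with `u = ψ - 1`. Marking the point `x₁`, `D a S = [0 ∈ S] a S`, is a derivation of this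
algebra, hence `ψ⁻¹ * D ψ = D (log ψ)`. At the full set the left side is `ψ⁻¹ ∗ D_{x₁} ψ`, and
the right side is `(log ψ)(X) = φ_{1+n}(x₁, y₁, …, yₙ)`, as `D` does not change values there.
-/

lemma Finset.sum_powerset_map {α β M : Type*} [AddCommMonoid M] [DecidableEq β] (s : Finset α)
    (e : α ↪ β) (g : Finset β → M) :
    ∑ t ∈ (s.map e).powerset, g t = ∑ t ∈ s.powerset, g (t.map e) := by
  rw [map_eq_image, powerset_image, sum_image]
  · simp only [map_eq_image]
  · exact fun t _ t' _ h => image_injective e.injective h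

/-- `Finset α → R`, with the subset convolution as product instead of the pointwise one. -/
def SetFunAlg (α R : Type*) : Type _ := Finset α → R

namespace SetFunAlg

section Ring

variable {α R : Type*}

@[ext] lemma ext {a b : SetFunAlg α R} (h : ∀ S, a S = b S) : a = b := funext h

variable [CommRing R]

instance : AddCommGroup (SetFunAlg α R) := Pi.addCommGroup

instance : Module R (SetFunAlg α R) := Pi.module _ _ _

@[simp] lemma add_apply (a b : SetFunAlg α R) (S : Finset α) : (a + b) S = a S + b S := rfl

@[simp] lemma sub_apply (a b : SetFunAlg α R) (S : Finset α) : (a - b) S = a S - b S := rfl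

@[simp] lemma zero_apply (S : Finset α) : (0 : SetFunAlg α R) S = 0 := rfl

@[simp] lemma smul_apply (r : R) (a : SetFunAlg α R) (S : Finset α) : (r • a) S = r * a S := rfl

variable [DecidableEq α]

instance : Mul (SetFunAlg α R) := ⟨fun a b S => ∑ T ∈ S.powerset, a T * b (S \ T)⟩

instance : One (SetFunAlg α R) := ⟨fun S => if S = ∅ then 1 else 0⟩

lemma mul_apply (a b : SetFunAlg α R) (S : Finset α) :
    (a * b) S = ∑ T ∈ S.powerset, a T * b (S \ T) := rfl

lemma one_apply (S : Finset α) : (1 : SetFunAlg α R) S = if S = ∅ then 1 else 0 := rfl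

protected lemma mul_comm (a b : SetFunAlg α R) : a * b = b * a := by
  ext S
  refine sum_nbij' (S \ ·) (S \ ·) (fun _ _ => mem_powerset.2 sdiff_subset)
    (fun _ _ => mem_powerset.2 sdiff_subset)
    (fun T hT => Finset.sdiff_sdiff_eq_self (mem_powerset.1 hT))
    (fun T hT => Finset.sdiff_sdiff_eq_self (mem_powerset.1 hT)) fun T hT => ?_
  rw [Finset.sdiff_sdiff_eq_self (mem_powerset.1 hT), mul_comm]

protected lemma mul_assoc (a b c : SetFunAlg α R) : a * b * c = a * (b * c) := by
  ext S
  simp only [mul_apply, sum_mul, mul_sum]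
  rw [sum_sigma', sum_sigma']
  refine sum_nbij' (fun p => ⟨p.2, p.1 \ p.2⟩) (fun p => ⟨p.1 ∪ p.2, p.1⟩) ?_ ?_ ?_ ?_ ?_
  all_goals simp only [mem_sigma, mem_powerset, and_imp, Sigma.forall]
  · exact fun T U hTS hUT => ⟨hUT.trans hTS, sdiff_subset_sdiff hTS le_rfl⟩
  · exact fun U V hUS hVS => ⟨union_subset hUS (hVS.trans sdiff_subset), subset_union_left⟩
  · intro T U _ hUT
    rw [union_sdiff_of_subset hUT]
  · intro U V _ hVS
    rw [union_sdiff_cancel_left (disjoint_sdiff.mono_right hVS)]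
  · intro T U _ hUT
    rw [sdiff_sdiff_sdiff_cancel_right hUT, mul_assoc]

protected lemma one_mul (a : SetFunAlg α R) : 1 * a = a := by
  ext S
  rw [mul_apply, sum_eq_single ∅ (fun T _ hT => by rw [one_apply, if_neg hT, zero_mul])
    (fun h => absurd (empty_mem_powerset S) h), one_apply, if_pos rfl, one_mul, sdiff_empty]

protected lemma mul_add (a b c : SetFunAlg α R) : a * (b + c) = a * b + a * c := by
  ext S
  simp only [add_apply, mul_apply, mul_add, sum_add_distrib]

protected lemma mul_zero (a : SetFunAlg α R) : a * 0 = 0 := by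
  ext S
  simp only [mul_apply, zero_apply, mul_zero, sum_const_zero]

instance : CommRing (SetFunAlg α R) :=
  { (inferInstance : AddCommGroup (SetFunAlg α R)) with
    mul_assoc := SetFunAlg.mul_assoc
    one_mul := SetFunAlg.one_mul
    mul_one := fun a => by rw [SetFunAlg.mul_comm, SetFunAlg.one_mul]
    zero_mul := fun a => by rw [SetFunAlg.mul_comm, SetFunAlg.mul_zero]
    mul_zero := SetFunAlg.mul_zero
    left_distrib := SetFunAlg.mul_add
    right_distrib := fun a b c => by
      rw [SetFunAlg.mul_comm, SetFunAlg.mul_add, SetFunAlg.mul_comm c, SetFunAlg.mul_comm c]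
    mul_comm := SetFunAlg.mul_comm }

protected lemma smul_mul (r : R) (a b : SetFunAlg α R) : r • a * b = r • (a * b) := by
  ext S
  simp only [mul_apply, smul_apply, mul_sum, mul_assoc]

instance : Algebra R (SetFunAlg α R) :=
  Algebra.ofModule SetFunAlg.smul_mul fun r a b => by
    rw [mul_comm, SetFunAlg.smul_mul, mul_comm]

@[simp] lemma sum_apply {ι : Type*} (s : Finset ι) (f : ι → SetFunAlg α R) (S : Finset α) :
    (∑ i ∈ s, f i) S = ∑ i ∈ s, f i S :=
  Finset.sum_apply S s f

end Ring

section Marking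

variable {α R : Type*} [CommRing R]

def VanishesBelow (k : ℕ) (a : SetFunAlg α R) : Prop := ∀ S : Finset α, S.card < k → a S = 0

lemma vanishesBelow_one_iff {a : SetFunAlg α R} : VanishesBelow 1 a ↔ a ∅ = 0 := by
  simp [VanishesBelow]

variable [DecidableEq α]

def mark (z : α) (a : SetFunAlg α R) : SetFunAlg α R := fun S => if z ∈ S then a S else 0

lemma mark_apply (z : α) (a : SetFunAlg α R) (S : Finset α) :
    mark z a S = if z ∈ S then a S else 0 := rfl

lemma mark_mul (z : α) (a b : SetFunAlg α R) : mark z (a * b) = mark z a * b + a * mark z b := by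
  ext S
  simp only [add_apply, mul_apply, mark_apply, ← sum_add_distrib]
  split_ifs with hz
  · refine sum_congr rfl fun T _ => ?_
    by_cases hzT : z ∈ T <;> simp [hzT, hz]
  · refine (sum_eq_zero fun T hT => ?_).symm
    have hzT : z ∉ T := fun h => hz (mem_powerset.1 hT h)
    simp [hzT, hz]

def markDerivation (z : α) : Derivation R (SetFunAlg α R) (SetFunAlg α R) :=
  Derivation.mk'
    { toFun := mark z
      map_add' := fun a b => SetFunAlg.ext fun S => by
        simp only [mark_apply, add_apply]; split_ifs <;> simp
      map_smul' := fun r a => SetFunAlg.ext fun S => by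
        simp only [mark_apply, smul_apply, RingHom.id_apply]; split_ifs <;> simp }
    fun a b => by
      change mark z (a * b) = a * mark z b + b * mark z a
      rw [mark_mul, add_comm, mul_comm (mark z a)]

lemma markDerivation_apply (z : α) (a : SetFunAlg α R) (S : Finset α) :
    markDerivation z a S = if z ∈ S then a S else 0 := rfl

lemma VanishesBelow.mul {j k : ℕ} {a b : SetFunAlg α R} (ha : VanishesBelow j a)
    (hb : VanishesBelow k b) : VanishesBelow (j + k) (a * b) := by
  intro S hS
  refine sum_eq_zero fun T hT => ?_
  have hTS := mem_powerset.1 hT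
  rcases lt_or_ge T.card j with h | h
  · rw [ha T h, zero_mul]
  · have : (S \ T).card < k := by
      have := card_le_card hTS
      rw [card_sdiff_of_subset hTS]
      omega
    rw [hb _ this, mul_zero]

lemma VanishesBelow.pow {u : SetFunAlg α R} (h : VanishesBelow 1 u) :
    ∀ k, VanishesBelow k (u ^ k)
  | 0 => fun _ hS => absurd hS (Nat.not_lt_zero _)
  | k + 1 => by
    rw [pow_succ]
    exact (h.pow k).mul h

lemma VanishesBelow.eq_zero [Fintype α] {a : SetFunAlg α R}
    (h : VanishesBelow (Fintype.card α + 1) a) : a = 0 :=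
  SetFunAlg.ext fun S => h S (Nat.lt_succ_of_le (card_le_univ S))

lemma vanishesBelow_one_markDerivation (z : α) (a : SetFunAlg α R) :
    VanishesBelow 1 (markDerivation z a) :=
  vanishesBelow_one_iff.2 (by rw [markDerivation_apply, if_neg (notMem_empty z)])

end Marking

section Log

variable {α 𝕜 : Type*} [DecidableEq α] [Fintype α] [Field 𝕜] [CharZero 𝕜]

/-- Truncating the series of `log (1 + u)` at `card α` loses nothing when `u ∅ = 0`,
since then `u ^ (card α + 1) = 0`. -/
def logOneAdd (u : SetFunAlg α 𝕜) : SetFunAlg α 𝕜 :=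
  ∑ k ∈ Icc 1 (Fintype.card α), ((-1 : 𝕜) ^ (k + 1) / k) • u ^ k

lemma markDerivation_logOneAdd (z : α) (u : SetFunAlg α 𝕜) :
    markDerivation z (logOneAdd u)
      = (∑ j ∈ range (Fintype.card α), (-u) ^ j) * markDerivation z u := by
  have reindex (g : ℕ → SetFunAlg α 𝕜) :
      ∑ k ∈ Icc 1 (Fintype.card α), g k = ∑ j ∈ range (Fintype.card α), g (j + 1) := by
    rw [← Nat.Ico_zero_eq_range, sum_Ico_add', Ico_add_one_right_eq_Icc, zero_add]
  rw [logOneAdd, map_sum, sum_mul, reindex]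
  refine sum_congr rfl fun j _ => ?_
  have hj : ((j : 𝕜) + 1) ≠ 0 := Nat.cast_add_one_ne_zero j
  rw [Derivation.map_smul, Derivation.leibniz_pow, smul_eq_mul, add_tsub_cancel_right,
    ← Nat.cast_smul_eq_nsmul 𝕜, smul_smul, ← neg_one_smul 𝕜 u, smul_pow, smul_mul_assoc]
  congr 1
  field_simp
  ring

lemma one_add_mul_markDerivation_logOneAdd (z : α) {u : SetFunAlg α 𝕜} (hu : u ∅ = 0) :
    (1 + u) * markDerivation z (logOneAdd u) = markDerivation z u := by
  have hnil : u ^ Fintype.card α * markDerivation z u = 0 :=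
    ((vanishesBelow_one_iff.2 hu).pow _ |>.mul (vanishesBelow_one_markDerivation z u)).eq_zero
  rw [markDerivation_logOneAdd, ← mul_assoc, ← sub_neg_eq_add, mul_neg_geom_sum, sub_mul,
    neg_pow, mul_assoc, hnil, mul_zero, sub_zero, one_mul]

theorem mul_markDerivation_apply_univ {P F : SetFunAlg α 𝕜} (hPF : P * F = 1) (hF : F ∅ = 1)
    (z : α) : (P * markDerivation z F) univ = logOneAdd (F - 1) univ := by
  have hu : (F - 1) ∅ = 0 := by rw [sub_apply, hF, one_apply, if_pos rfl, sub_self]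
  have hlog := one_add_mul_markDerivation_logOneAdd z hu
  rw [add_sub_cancel, map_sub, Derivation.map_one_eq_zero, sub_zero] at hlog
  rw [← hlog, ← mul_assoc, hPF, one_mul, markDerivation_apply, if_pos (mem_univ z)]

end Log

end SetFunAlg

open SetFunAlg (logOneAdd markDerivation)

section Configurations

variable {d : ℕ}

lemma apply_subseqVals_of_strictMono (f : SeqFun d) {N m : ℕ}
    (X : Fin N → EuclideanSpace ℝ (Fin d)) (T : Finset (Fin N)) {g : Fin m → Fin N}
    (hg : StrictMono g) (hgT : ∀ i, g i ∈ T) (hT : T.card = m) :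
    f T.card (subseqVals X T) = f m (X ∘ g) := by
  subst hT
  rw [orderEmbOfFin_unique rfl hgT hg]
  rfl

def SeqFun.onSubsets (f : SeqFun d) {N : ℕ} (X : Fin N → EuclideanSpace ℝ (Fin d)) :
    SetFunAlg (Fin N) ℝ :=
  fun S => f S.card (subseqVals X S)

lemma SeqFun.onSubsets_map (f : SeqFun d) {N m : ℕ} (X : Fin N → EuclideanSpace ℝ (Fin d))
    (e : Fin m ↪o Fin N) (S : Finset (Fin m)) :
    f.onSubsets X (S.map e.toEmbedding) = f.onSubsets (X ∘ e) S :=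
  apply_subseqVals_of_strictMono f X _ (e.strictMono.comp (S.orderEmbOfFin rfl).strictMono)
    (fun i => mem_map_of_mem _ (orderEmbOfFin_mem S rfl i)) (card_map _)

lemma SeqFun.onSubsets_univ (f : SeqFun d) {N : ℕ} (X : Fin N → EuclideanSpace ℝ (Fin d)) :
    f.onSubsets X univ = f N X :=
  apply_subseqVals_of_strictMono f X univ strictMono_id (fun _ => mem_univ _) (card_fin N)

lemma SeqFun.onSubsets_conv (f g : SeqFun d) {N : ℕ} (X : Fin N → EuclideanSpace ℝ (Fin d)) :
    (conv f g).onSubsets X = f.onSubsets X * g.onSubsets X := by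
  ext S
  set e := S.orderEmbOfFin rfl
  have hS : univ.map e.toEmbedding = S := by
    rw [map_eq_image]
    exact image_orderEmbOfFin_univ S rfl
  calc (conv f g).onSubsets X S
      = ∑ T : Finset (Fin S.card), f.onSubsets (X ∘ e) T * g.onSubsets (X ∘ e) Tᶜ := rfl
    _ = ∑ T ∈ (univ.map e.toEmbedding).powerset,
          f.onSubsets X T * g.onSubsets X (univ.map e.toEmbedding \ T) := by
      rw [sum_powerset_map, powerset_univ]
      refine sum_congr rfl fun T _ => ?_
      rw [← Finset.map_sdiff, ← compl_eq_univ_sdiff, f.onSubsets_map, g.onSubsets_map]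
    _ = (f.onSubsets X * g.onSubsets X) S := by rw [hS, SetFunAlg.mul_apply]

lemma SeqFun.onSubsets_oneSeq {N : ℕ} (X : Fin N → EuclideanSpace ℝ (Fin d)) :
    (oneSeq d).onSubsets X = 1 := by
  ext S
  simp [SeqFun.onSubsets, oneSeq, SetFunAlg.one_apply]

lemma SeqFun.onSubsets_sub (f g : SeqFun d) {N : ℕ} (X : Fin N → EuclideanSpace ℝ (Fin d)) :
    (f - g).onSubsets X = f.onSubsets X - g.onSubsets X := rfl

lemma SeqFun.onSubsets_convPow (f : SeqFun d) {N : ℕ} (X : Fin N → EuclideanSpace ℝ (Fin d)) :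
    ∀ k, (convPow f k).onSubsets X = f.onSubsets X ^ k
  | 0 => SeqFun.onSubsets_oneSeq X
  | k + 1 => by
    rw [convPow, SeqFun.onSubsets_conv, SeqFun.onSubsets_convPow f X k, pow_succ']

lemma GammaInv_eq_logOneAdd (f : SeqFun d) {N : ℕ} (X : Fin N → EuclideanSpace ℝ (Fin d)) :
    GammaInv f N X = logOneAdd (f.onSubsets X) univ := by
  simp only [GammaInv, logOneAdd, SetFunAlg.sum_apply, SetFunAlg.smul_apply, Fintype.card_fin,
    ← SeqFun.onSubsets_convPow, SeqFun.onSubsets_univ]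

lemma boltzmann_zero (Φ : EuclideanSpace ℝ (Fin d) → ℝ)
    (v : Fin 0 → EuclideanSpace ℝ (Fin d)) : boltzmann Φ 0 v = 1 := by
  simp [boltzmann, energy]

lemma strictMono_cons_zero_succ {m N : ℕ} {g : Fin m → Fin N} (hg : StrictMono g) :
    StrictMono (Fin.cons 0 (Fin.succ ∘ g) : Fin (m + 1) → Fin (N + 1)) := by
  intro a b hab
  cases b using Fin.cases with
  | zero => exact absurd hab (Fin.not_lt_zero a)
  | succ j =>
    cases a using Fin.cases with
    | zero => simp
    | succ i => simpa using hg (Fin.succ_lt_succ_iff.1 hab)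

lemma SeqFun.onSubsets_cons_insert_zero (f : SeqFun d) {n : ℕ} (x : EuclideanSpace ℝ (Fin d))
    (y : Fin n → EuclideanSpace ℝ (Fin d)) (W : Finset (Fin n)) :
    f.onSubsets (Fin.cons x y) (insert 0 (W.map (Fin.succOrderEmb n).toEmbedding))
      = f (W.card + 1) (Fin.cons x (subseqVals y W)) := by
  have h0 : (0 : Fin (n + 1)) ∉ W.map (Fin.succOrderEmb n).toEmbedding := by
    simp [Fin.succ_ne_zero]
  have hmem : ∀ i, (Fin.cons 0 (Fin.succ ∘ W.orderEmbOfFin rfl) : Fin (W.card + 1) → _) i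
      ∈ insert 0 (W.map (Fin.succOrderEmb n).toEmbedding) := by
    intro i
    cases i using Fin.cases with
    | zero => exact mem_insert_self _ _
    | succ i => simp
  rw [SeqFun.onSubsets, apply_subseqVals_of_strictMono f _ _
    (strictMono_cons_zero_succ (W.orderEmbOfFin rfl).strictMono) hmem
    (by rw [card_insert_of_notMem h0, card_map])]
  congr 1
  funext i
  cases i using Fin.cases <;> rfl

lemma conv_shift_eq_mul_markDerivation (P F : SeqFun d) {n : ℕ} (x : EuclideanSpace ℝ (Fin d))
    (y : Fin n → EuclideanSpace ℝ (Fin d)) :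
    conv P (fun k Y => F (k + 1) (Fin.cons x Y)) n y
      = (P.onSubsets (Fin.cons x y) * markDerivation 0 (F.onSubsets (Fin.cons x y))) univ := by
  set s := univ.map (Fin.succOrderEmb n).toEmbedding
  have h0 : (0 : Fin (n + 1)) ∉ s := by simp [s, Fin.succ_ne_zero]
  have huniv : (univ : Finset (Fin (n + 1))) = insert 0 s := by
    rw [Fin.univ_succ, cons_eq_insert]
    rfl
  rw [SetFunAlg.mul_apply, huniv, sum_powerset_insert h0, sum_powerset_map, powerset_univ]
  have hmarked (t : Finset (Fin (n + 1))) :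
      markDerivation 0 (F.onSubsets (Fin.cons x y)) (insert 0 s \ insert 0 t) = 0 := by
    rw [SetFunAlg.markDerivation_apply, if_neg (by simp)]
  rw [sum_eq_zero (s := s.powerset) fun t _ => by rw [hmarked t, mul_zero], add_zero]
  refine sum_congr rfl fun S _ => ?_
  have hS : 0 ∉ S.map (Fin.succOrderEmb n).toEmbedding := by simp [Fin.succ_ne_zero]
  rw [insert_sdiff_of_notMem _ hS, ← Finset.map_sdiff, ← compl_eq_univ_sdiff,
    SetFunAlg.markDerivation_apply, if_pos (mem_insert_self _ _),
    F.onSubsets_cons_insert_zero, P.onSubsets_map]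
  rfl

end Configurations

/-- with `ψ` the Boltzmann factors, `ψ⁻¹` its `∗`-inverse, and
`(D_{x₁}ψ)ₙ(y₁,…,yₙ) = ψ_{1+n}(x₁,y₁,…,yₙ)`, the function
`φ̃_{(x₁)} = ψ⁻¹ ∗ D_{x₁}ψ` satisfies
`φ̃_{(x₁)}(y₁,…,yₙ) = φ_{1+n}(x₁,y₁,…,yₙ)`, where `φ = Γ⁻¹ψ` is the sequence of
Ursell functions. -/
theorem stmt_12 (d : ℕ) (Φ : EuclideanSpace ℝ (Fin d) → ℝ)
    (psiInv : SeqFun d)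
    (hinv : conv psiInv (boltzmann Φ) = oneSeq d)
    (x₁ : EuclideanSpace ℝ (Fin d)) (n : ℕ)
    (y : Fin n → EuclideanSpace ℝ (Fin d)) :
    conv psiInv (fun k Y => boltzmann Φ (k + 1) (Fin.cons x₁ Y)) n y =
      GammaInv (boltzmann Φ - oneSeq d) (n + 1) (Fin.cons x₁ y) := by
  set X : Fin (n + 1) → EuclideanSpace ℝ (Fin d) := Fin.cons x₁ y
  have hinvX : psiInv.onSubsets X * (boltzmann Φ).onSubsets X = 1 := by
    rw [← SeqFun.onSubsets_conv, hinv, SeqFun.onSubsets_oneSeq]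
  have hempty : (boltzmann Φ).onSubsets X ∅ = 1 := boltzmann_zero Φ _
  rw [conv_shift_eq_mul_markDerivation, SetFunAlg.mul_markDerivation_apply_univ hinvX hempty,
    GammaInv_eq_logOneAdd, SeqFun.onSubsets_sub, SeqFun.onSubsets_oneSeq]

end
end

section
/- (Telescoping product difference bound) Suppose x₂,…,xₘ are pairwise 1-separated from x₁ and from each other, Y₁,…,Yₛ ∈ C, and g₁, g₂ satisfy the hard-core assumptions with constant c < 1. Then ∑_{z₁∈Y₁}⋯∑_{zₛ∈Yₛ} |∏_{i=2}^m f₁(xᵢ−x₁)∏_{j=1}^s g₁(zⱼ−x₁) − ∏_{i=2}^m f₂(xᵢ−x₁)∏_{j=1}^s g₂(zⱼ−x₁)| ≤ (m+s)·e^{2c}·(c₀+c)^s·‖g₁−g₂‖, where fₖ = gₖ + 1. -/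
/-!
Write the summand as `P₁ Q₁(z) - P₂ Q₂(z)`, where `P` collects the factors at the points `xᵢ`
and `Q(z)` those at the `zⱼ`, and split it as `(P₁ - P₂) Q₁ + P₂ (Q₁ - Q₂)`. Both differences
are telescoped one factor at a time. Along the `xᵢ` every factor `|gₗ + 1|` is at most
`e^{|g₁| + |g₂|}`, so the undisturbed factors multiply to at most `e^{2c}`, and the differing one
is at most `‖g₁ - g₂‖`. Along the `zⱼ` the sum over `Y₁ × ⋯ × Yₛ` factorises, and each
coordinate sum over a separated `Yⱼ` is at most `c₀ + c`: at most `c₀` of its points lie in the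
unit ball around `x₁`, where `|gₗ| = 1`, and the others contribute at most `‖gₗ‖ ≤ c`.
-/

open Finset Metric

namespace Finset

theorem prod_le_mul_prod_erase {ι : Type*} [Fintype ι] [DecidableEq ι] {w M : ι → ℝ} {D : ℝ}
    (i : ι) (hw : ∀ j, 0 ≤ w j) (hi : w i ≤ D) (hM : ∀ j ≠ i, w j ≤ M j) :
    ∏ j, w j ≤ D * ∏ j ∈ univ.erase i, M j := by
  calc ∏ j, w j ≤ ∏ j, Function.update M i D j := by
        refine prod_le_prod (fun j _ => hw j) (fun j _ => ?_)
        rcases eq_or_ne j i with rfl | h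
        · simpa using hi
        · simpa [h] using hM j h
    _ = D * ∏ j ∈ univ.erase i, M j := by
        rw [prod_update_of_mem (mem_univ i), sdiff_singleton_eq_erase]

theorem sum_piFinset_prod_abs_le {ι α : Type*} [Fintype ι] [DecidableEq ι] (Y : ι → Finset α)
    (u : ι → α → ℝ) {C : ℝ} (hu : ∀ i, ∑ y ∈ Y i, |u i y| ≤ C) :
    ∑ z ∈ Fintype.piFinset Y, |∏ i, u i (z i)| ≤ C ^ Fintype.card ι := by
  simp only [abs_prod]
  rw [← prod_univ_sum Y fun i y => |u i y|, ← card_univ, ← prod_const]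
  exact prod_le_prod (fun i _ => sum_nonneg fun y _ => abs_nonneg _) fun i _ => hu i

section Ordered

variable {ι : Type*} [Fintype ι] [LinearOrder ι]

theorem prod_ite_lt_eq_gt {R : Type*} [CommMonoid R] (A B C : ι → R) (i : ι) :
    ∏ j, (if j < i then A j else if j = i then B j else C j) =
      B i * (∏ j with j < i, A j) * ∏ j with i < j, C j := by
  rw [prod_ite, prod_ite, filter_filter, filter_filter]
  have h_eq : ({j | ¬j < i ∧ j = i} : Finset ι) = {i} := by
    ext j; simp only [mem_filter, mem_univ, true_and, mem_singleton]
    exact ⟨And.right, fun h => ⟨h.not_lt, h⟩⟩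
  have h_gt : ({j | ¬j < i ∧ ¬j = i} : Finset ι) = ({j | i < j} : Finset ι) := by
    ext j; simp only [mem_filter, mem_univ, true_and]
    exact ⟨fun ⟨h₁, h₂⟩ => lt_of_le_of_ne (not_lt.1 h₁) (Ne.symm h₂), fun h => ⟨h.not_gt, h.ne'⟩⟩
  rw [h_eq, h_gt, prod_singleton]
  ac_rfl

theorem abs_prod_sub_prod_le (a b : ι → ℝ) :
    |∏ j, a j - ∏ j, b j| ≤
      ∑ i, ∏ j, (if j < i then |a j| else if j = i then |a j - b j| else |b j|) := by
  have h_tel := prod_add_ordered univ b (fun j => a j - b j)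
  simp only [add_sub_cancel] at h_tel
  rw [h_tel, add_sub_cancel_left]
  refine (abs_sum_le_sum_abs _ _).trans (le_of_eq (sum_congr rfl fun i _ => ?_))
  rw [prod_ite_lt_eq_gt, abs_mul, abs_mul, abs_prod, abs_prod]

theorem sum_piFinset_abs_prod_sub_prod_le {α : Type*} (Y : ι → Finset α)
    (u v : ι → α → ℝ) (M D : ι → ℝ)
    (hu : ∀ i, ∑ y ∈ Y i, |u i y| ≤ M i) (hv : ∀ i, ∑ y ∈ Y i, |v i y| ≤ M i)
    (huv : ∀ i, ∑ y ∈ Y i, |u i y - v i y| ≤ D i) :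
    ∑ z ∈ Fintype.piFinset Y, |∏ i, u i (z i) - ∏ i, v i (z i)| ≤
      ∑ i, D i * ∏ j ∈ univ.erase i, M j := by
  refine (sum_le_sum fun z _ => abs_prod_sub_prod_le _ _).trans ?_
  rw [sum_comm]
  refine sum_le_sum fun i _ => ?_
  have h_split := prod_univ_sum Y fun j y =>
    if j < i then |u j y| else if j = i then |u j y - v j y| else |v j y|
  rw [← h_split]
  refine prod_le_mul_prod_erase i (fun j => sum_nonneg fun y _ => by positivity) ?_ fun j hj => ?_
  · simpa using huv i
  · rcases hj.lt_or_gt with h | h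
    · simpa [h] using hu j
    · simpa [h.not_gt, h.ne'] using hv j

theorem sum_piFinset_abs_prod_sub_prod_le_of_const {α : Type*}
    (Y : ι → Finset α) (u v : ι → α → ℝ) {C t : ℝ} (hC : 1 ≤ C) (ht : 0 ≤ t)
    (hu : ∀ i, ∑ y ∈ Y i, |u i y| ≤ C) (hv : ∀ i, ∑ y ∈ Y i, |v i y| ≤ C)
    (huv : ∀ i, ∑ y ∈ Y i, |u i y - v i y| ≤ t) :
    ∑ z ∈ Fintype.piFinset Y, |∏ i, u i (z i) - ∏ i, v i (z i)| ≤
      Fintype.card ι * (t * C ^ Fintype.card ι) := by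
  refine (sum_piFinset_abs_prod_sub_prod_le Y u v (fun _ => C) (fun _ => t) hu hv huv).trans ?_
  rw [← nsmul_eq_mul, ← card_univ, ← sum_const]
  refine sum_le_sum fun i _ => mul_le_mul_of_nonneg_left ?_ ht
  rw [prod_const, card_univ]
  exact pow_le_pow_right₀ hC ((card_erase_le).trans_eq card_univ)

end Ordered

end Finset

section Separated

variable {E : Type*} [SeminormedAddCommGroup E]

def OneSeparated (X : Finset E) : Prop :=
  ∀ x ∈ X, ∀ y ∈ X, x ≠ y → 1 ≤ dist x y

/-- `SeparatedSumLE h M` is the bound `‖h‖ ≤ M` for the norm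
`‖h‖ = sup {∑ x ∈ X, |h x| : X 1-separated, outside the open unit ball}`. -/
def SeparatedSumLE (h : E → ℝ) (M : ℝ) : Prop :=
  ∀ X : Finset E, (∀ x ∈ X, 1 ≤ ‖x‖) → OneSeparated X → ∑ x ∈ X, |h x| ≤ M

theorem OneSeparated.mono {X X' : Finset E} (hX : OneSeparated X) (h : X' ⊆ X) :
    OneSeparated X' :=
  fun x hx y hy => hX x (h hx) y (h hy)

theorem oneSeparated_image_univ {ι : Type*} [Fintype ι] [DecidableEq E] {xs : ι → E}
    (hxs : ∀ i j, i ≠ j → 1 ≤ dist (xs i) (xs j)) : OneSeparated (univ.image xs) := by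
  simp only [OneSeparated, mem_image, mem_univ, true_and]
  rintro _ ⟨i, rfl⟩ _ ⟨j, rfl⟩ hij
  exact hxs i j fun h => hij (h ▸ rfl)

theorem injective_of_one_le_dist {ι : Type*} {xs : ι → E}
    (hxs : ∀ i j, i ≠ j → 1 ≤ dist (xs i) (xs j)) : Function.Injective xs := by
  intro i j hij
  by_contra hne
  have := hxs i j hne
  rw [hij, dist_self] at this
  linarith

theorem SeparatedSumLE.sum_comp_sub_le {h : E → ℝ} {M : ℝ} (hh : SeparatedSumLE h M)
    {a : E} {F : Finset E} (hF : OneSeparated F) (hfar : ∀ y ∈ F, 1 ≤ dist y a) :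
    ∑ y ∈ F, |h (y - a)| ≤ M := by
  classical
  rw [← sum_image (f := fun x => |h x|) (g := (· - a)) fun _ _ _ _ => (sub_left_injective ·)]
  refine hh _ ?_ ?_
  · simp only [mem_image]
    rintro _ ⟨y, hy, rfl⟩
    simpa [dist_eq_norm] using hfar y hy
  · simp only [OneSeparated, mem_image]
    rintro _ ⟨u, hu, rfl⟩ _ ⟨v, hv, rfl⟩ huv
    rw [dist_sub_right]
    exact hF u hu v hv fun h => huv (h ▸ rfl)

theorem SeparatedSumLE.sum_comp_sub_le_mul_add {h : E → ℝ} {M θ c₀ : ℝ}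
    (hh : SeparatedSumLE h M) (hθ : 0 ≤ θ) (hcore : ∀ x, ‖x‖ < 1 → |h x| = θ) {a : E}
    (hc₀ : ∀ S : Finset E, ↑S ⊆ ball a 1 → OneSeparated S → (#S : ℝ) ≤ c₀)
    {Y : Finset E} (hY : OneSeparated Y) :
    ∑ y ∈ Y, |h (y - a)| ≤ θ * c₀ + M := by
  classical
  rw [← sum_filter_add_sum_filter_not Y fun y => dist y a < 1]
  gcongr
  · have h_near : ∀ y ∈ Y.filter (fun y => dist y a < 1), |h (y - a)| = θ := fun y hy =>
      hcore _ (by simpa [dist_eq_norm] using (mem_filter.1 hy).2)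
    rw [sum_congr rfl h_near, sum_const, nsmul_eq_mul, mul_comm]
    refine mul_le_mul_of_nonneg_left (hc₀ _ ?_ (hY.mono (filter_subset _ _))) hθ
    intro y hy
    simpa using (mem_filter.1 hy).2
  · exact hh.sum_comp_sub_le (hY.mono (filter_subset _ _)) fun y hy =>
      not_lt.1 (mem_filter.1 hy).2

theorem SeparatedSumLE.abs_le {h : E → ℝ} {M : ℝ}
    (hh : SeparatedSumLE h M) {x : E} (hx : 1 ≤ ‖x‖) : |h x| ≤ M := by
  simpa using hh {x} (by simpa using hx) (by simp [OneSeparated])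

theorem SeparatedSumLE.sum_fintype_comp_sub_le {ι : Type*} [Fintype ι] {h : E → ℝ} {M : ℝ}
    (hh : SeparatedSumLE h M) {a : E} {xs : ι → E}
    (hxs : ∀ i j, i ≠ j → 1 ≤ dist (xs i) (xs j)) (hfar : ∀ i, 1 ≤ dist (xs i) a) :
    ∑ i, |h (xs i - a)| ≤ M := by
  classical
  rw [← sum_image (f := fun y => |h (y - a)|) fun i _ j _ => (injective_of_one_le_dist hxs ·)]
  exact hh.sum_comp_sub_le (oneSeparated_image_univ hxs) (by simpa using hfar)

end Separated

theorem abs_add_one_le_exp_abs (x : ℝ) : |x + 1| ≤ Real.exp |x| :=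
  (abs_add_le x 1).trans (by simpa [add_comm] using Real.add_one_le_exp |x|)

theorem abs_prod_add_one_le_exp {ι : Type*} [Fintype ι] (a : ι → ℝ) {c : ℝ}
    (ha : ∑ i, |a i| ≤ c) : |∏ i, (a i + 1)| ≤ Real.exp c := by
  rw [abs_prod]
  calc ∏ i, |a i + 1| ≤ ∏ i, Real.exp |a i| :=
        prod_le_prod (fun i _ => abs_nonneg _) fun i _ => abs_add_one_le_exp_abs (a i)
    _ = Real.exp (∑ i, |a i|) := (Real.exp_sum _ _).symm
    _ ≤ Real.exp c := Real.exp_le_exp.2 ha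

theorem abs_prod_add_one_sub_prod_add_one_le {ι : Type*} [Fintype ι] [LinearOrder ι]
    (a b : ι → ℝ) {c t : ℝ} (ha : ∑ i, |a i| ≤ c) (hb : ∑ i, |b i| ≤ c)
    (hab : ∀ i, |a i - b i| ≤ t) :
    |∏ i, (a i + 1) - ∏ i, (b i + 1)| ≤ Fintype.card ι * (Real.exp (2 * c) * t) := by
  refine (abs_prod_sub_prod_le _ _).trans ?_
  rw [← nsmul_eq_mul, ← card_univ, ← sum_const]
  refine sum_le_sum fun i _ => ?_
  have h_erase : ∑ j ∈ univ.erase i, (|a j| + |b j|) ≤ 2 * c := by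
    calc ∑ j ∈ univ.erase i, (|a j| + |b j|) ≤ ∑ j, (|a j| + |b j|) :=
          sum_le_sum_of_subset_of_nonneg (subset_univ _) fun j _ _ => by positivity
      _ ≤ 2 * c := by rw [sum_add_distrib]; linarith
  calc _ ≤ t * ∏ j ∈ univ.erase i, Real.exp (|a j| + |b j|) := by
        refine prod_le_mul_prod_erase i (fun j => by split_ifs <;> positivity)
          (by simpa using hab i) fun j hj => ?_
        rcases hj.lt_or_gt with h | h
        · simpa [h] using (abs_add_one_le_exp_abs (a j)).trans
            (Real.exp_le_exp.2 (le_add_of_nonneg_right (abs_nonneg (b j))))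
        · simpa [h.not_gt, h.ne'] using (abs_add_one_le_exp_abs (b j)).trans
            (Real.exp_le_exp.2 (le_add_of_nonneg_left (abs_nonneg (a j))))
    _ ≤ t * Real.exp (2 * c) := by
        rw [← Real.exp_sum]
        exact mul_le_mul_of_nonneg_left (Real.exp_le_exp.2 h_erase) ((abs_nonneg _).trans (hab i))
    _ = Real.exp (2 * c) * t := mul_comm _ _

theorem sum_abs_mul_sub_mul_le {α : Type*} (S : Finset α) (P₁ P₂ : ℝ) (Q₁ Q₂ : α → ℝ) :
    ∑ z ∈ S, |P₁ * Q₁ z - P₂ * Q₂ z| ≤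
      |P₁ - P₂| * ∑ z ∈ S, |Q₁ z| + |P₂| * ∑ z ∈ S, |Q₁ z - Q₂ z| := by
  rw [mul_sum, mul_sum, ← sum_add_distrib]
  refine sum_le_sum fun z _ => ?_
  rw [← abs_mul, ← abs_mul]
  calc |P₁ * Q₁ z - P₂ * Q₂ z| = |(P₁ - P₂) * Q₁ z + P₂ * (Q₁ z - Q₂ z)| := by ring_nf
    _ ≤ _ := abs_add_le _ _

theorem stmt_16_general (d : ℕ) (g₁ g₂ : EuclideanSpace ℝ (Fin d) → ℝ) (c c₀ t : ℝ)
    (hc0 : 0 ≤ c) (ht : 0 ≤ t)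
    (h₁core : ∀ x, ‖x‖ < 1 → g₁ x = -1) (h₂core : ∀ x, ‖x‖ < 1 → g₂ x = -1)
    (h₁sum : ∀ X : Finset (EuclideanSpace ℝ (Fin d)),
      (∀ x ∈ X, 1 ≤ ‖x‖) → (∀ x ∈ X, ∀ y ∈ X, x ≠ y → 1 ≤ dist x y) →
      ∑ x ∈ X, |g₁ x| ≤ c)
    (h₂sum : ∀ X : Finset (EuclideanSpace ℝ (Fin d)),
      (∀ x ∈ X, 1 ≤ ‖x‖) → (∀ x ∈ X, ∀ y ∈ X, x ≠ y → 1 ≤ dist x y) →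
      ∑ x ∈ X, |g₂ x| ≤ c)
    (hdiff : ∀ X : Finset (EuclideanSpace ℝ (Fin d)),
      (∀ x ∈ X, 1 ≤ ‖x‖) → (∀ x ∈ X, ∀ y ∈ X, x ≠ y → 1 ≤ dist x y) →
      ∑ x ∈ X, |g₁ x - g₂ x| ≤ t)
    (hc₀ : ∀ (z : EuclideanSpace ℝ (Fin d)) (S : Finset (EuclideanSpace ℝ (Fin d))),
      ↑S ⊆ ball z 1 → (∀ x ∈ S, ∀ y ∈ S, x ≠ y → 1 ≤ dist x y) → (S.card : ℝ) ≤ c₀)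
    (k : ℕ) (x₁ : EuclideanSpace ℝ (Fin d)) (xs : Fin k → EuclideanSpace ℝ (Fin d))
    (hsep₁ : ∀ i, 1 ≤ dist (xs i) x₁)
    (hsep : ∀ i j, i ≠ j → 1 ≤ dist (xs i) (xs j))
    (s : ℕ) (Y : Fin s → Finset (EuclideanSpace ℝ (Fin d)))
    (hY : ∀ j, ∀ u ∈ Y j, ∀ v ∈ Y j, u ≠ v → 1 ≤ dist u v) :
    ∑ z ∈ Fintype.piFinset Y,
      |(∏ i : Fin k, (g₁ (xs i - x₁) + 1)) * (∏ j : Fin s, g₁ (z j - x₁)) -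
        (∏ i : Fin k, (g₂ (xs i - x₁) + 1)) * (∏ j : Fin s, g₂ (z j - x₁))| ≤
      ((k + 1 + s : ℕ) : ℝ) * Real.exp (2 * c) * (c₀ + c) ^ s * t := by
  classical
  have hc₀_one : 1 ≤ c₀ := by simpa using hc₀ x₁ {x₁} (by simp) (by simp)
  have h₁₂sum : SeparatedSumLE (fun x => g₁ x - g₂ x) t := hdiff
  have hY₁ : ∀ j, ∑ y ∈ Y j, |g₁ (y - x₁)| ≤ c₀ + c := fun j => by
    simpa using SeparatedSumLE.sum_comp_sub_le_mul_add h₁sum zero_le_one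
      (fun x hx => by simp [h₁core x hx]) (hc₀ x₁) (hY j)
  have hY₂ : ∀ j, ∑ y ∈ Y j, |g₂ (y - x₁)| ≤ c₀ + c := fun j => by
    simpa using SeparatedSumLE.sum_comp_sub_le_mul_add h₂sum zero_le_one
      (fun x hx => by simp [h₂core x hx]) (hc₀ x₁) (hY j)
  have hY₁₂ : ∀ j, ∑ y ∈ Y j, |g₁ (y - x₁) - g₂ (y - x₁)| ≤ t := fun j => by
    simpa using h₁₂sum.sum_comp_sub_le_mul_add le_rfl
      (fun x hx => by simp [h₁core x hx, h₂core x hx]) (hc₀ x₁) (hY j)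
  have hP := abs_prod_add_one_sub_prod_add_one_le (fun i => g₁ (xs i - x₁))
    (fun i => g₂ (xs i - x₁)) (SeparatedSumLE.sum_fintype_comp_sub_le h₁sum hsep hsep₁)
    (SeparatedSumLE.sum_fintype_comp_sub_le h₂sum hsep hsep₁)
    fun i => h₁₂sum.abs_le (by simpa [dist_eq_norm] using hsep₁ i)
  have hP₂ := abs_prod_add_one_le_exp _ (SeparatedSumLE.sum_fintype_comp_sub_le h₂sum hsep hsep₁)
  have hQ₁ := sum_piFinset_prod_abs_le Y (fun _ y => g₁ (y - x₁)) hY₁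
  have hQ := sum_piFinset_abs_prod_sub_prod_le_of_const Y (fun _ y => g₁ (y - x₁))
    (fun _ y => g₂ (y - x₁)) (by linarith) ht hY₁ hY₂ hY₁₂
  simp only [Fintype.card_fin] at hP hQ₁ hQ
  have h_exp : Real.exp c ≤ Real.exp (2 * c) := Real.exp_le_exp.2 (by linarith)
  calc _ ≤ _ := sum_abs_mul_sub_mul_le _ _ _ _ _
    _ ≤ k * (Real.exp (2 * c) * t) * (c₀ + c) ^ s +
          Real.exp (2 * c) * (s * (t * (c₀ + c) ^ s)) := by
        gcongr
        exact hP₂.trans h_exp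
    _ ≤ _ := by
        push_cast
        nlinarith [mul_nonneg (mul_nonneg (Real.exp_pos (2 * c)).le
          (pow_nonneg (by linarith : (0 : ℝ) ≤ c₀ + c) s)) ht]

/-- telescoping product difference bound: with `x₂,…,xₘ` (here
`xs 0, …, xs (k-1)` with `k = m - 1`) pairwise 1-separated from `x₁` and from each
other, `Y₁,…,Yₛ` finite 1-separated sets, `g₁, g₂` satisfying the hard-core
assumptions with constant `c < 1`, `‖g₁ - g₂‖ ≤ t`, and `c₀` bounding the number of
1-separated points in a unit ball,
`∑_{z∈Y₁×⋯×Yₛ} |∏_i f₁(xᵢ-x₁)∏_j g₁(zⱼ-x₁) - ∏_i f₂(xᵢ-x₁)∏_j g₂(zⱼ-x₁)|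
  ≤ (m+s)·e^{2c}·(c₀+c)^s·t`, where `fₗ = gₗ + 1`. -/
theorem stmt_16 (d : ℕ) (g₁ g₂ : EuclideanSpace ℝ (Fin d) → ℝ) (c c₀ t : ℝ)
    (hc0 : 0 ≤ c) (hc : c < 1) (ht : 0 ≤ t)
    (h₁even : ∀ x, g₁ (-x) = g₁ x) (h₂even : ∀ x, g₂ (-x) = g₂ x)
    (h₁ge : ∀ x, 1 ≤ ‖x‖ → -c ≤ g₁ x) (h₂ge : ∀ x, 1 ≤ ‖x‖ → -c ≤ g₂ x)
    (h₁core : ∀ x, ‖x‖ < 1 → g₁ x = -1) (h₂core : ∀ x, ‖x‖ < 1 → g₂ x = -1)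
    (h₁sum : ∀ X : Finset (EuclideanSpace ℝ (Fin d)),
      (∀ x ∈ X, 1 ≤ ‖x‖) → (∀ x ∈ X, ∀ y ∈ X, x ≠ y → 1 ≤ dist x y) →
      ∑ x ∈ X, |g₁ x| ≤ c)
    (h₂sum : ∀ X : Finset (EuclideanSpace ℝ (Fin d)),
      (∀ x ∈ X, 1 ≤ ‖x‖) → (∀ x ∈ X, ∀ y ∈ X, x ≠ y → 1 ≤ dist x y) →
      ∑ x ∈ X, |g₂ x| ≤ c)
    (hdiff : ∀ X : Finset (EuclideanSpace ℝ (Fin d)),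
      (∀ x ∈ X, 1 ≤ ‖x‖) → (∀ x ∈ X, ∀ y ∈ X, x ≠ y → 1 ≤ dist x y) →
      ∑ x ∈ X, |g₁ x - g₂ x| ≤ t)
    (hc₀ : ∀ (z : EuclideanSpace ℝ (Fin d)) (S : Finset (EuclideanSpace ℝ (Fin d))),
      ↑S ⊆ ball z 1 → (∀ x ∈ S, ∀ y ∈ S, x ≠ y → 1 ≤ dist x y) → (S.card : ℝ) ≤ c₀)
    (k : ℕ) (x₁ : EuclideanSpace ℝ (Fin d)) (xs : Fin k → EuclideanSpace ℝ (Fin d))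
    (hsep₁ : ∀ i, 1 ≤ dist (xs i) x₁)
    (hsep : ∀ i j, i ≠ j → 1 ≤ dist (xs i) (xs j))
    (s : ℕ) (Y : Fin s → Finset (EuclideanSpace ℝ (Fin d)))
    (hY : ∀ j, ∀ u ∈ Y j, ∀ v ∈ Y j, u ≠ v → 1 ≤ dist u v) :
    ∑ z ∈ Fintype.piFinset Y,
      |(∏ i : Fin k, (g₁ (xs i - x₁) + 1)) * (∏ j : Fin s, g₁ (z j - x₁)) -
        (∏ i : Fin k, (g₂ (xs i - x₁) + 1)) * (∏ j : Fin s, g₂ (z j - x₁))| ≤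
      ((k + 1 + s : ℕ) : ℝ) * Real.exp (2 * c) * (c₀ + c) ^ s * t :=
  stmt_16_general d g₁ g₂ c c₀ t hc0 ht h₁core h₂core h₁sum h₂sum hdiff hc₀ k x₁ xs hsep₁ hsep s Y
    hY
end

section
/- (Recursive inequality implies factorial bound) Suppose nonnegative numbers d(m,n) (m,n ≥ 0) satisfy d(0,n) = 0 for all n, and for m ≥ 1: d(m,n) ≤ ∑_{s=0}^n (n!/(s!(n−s)!)) e^c (c₀+c)^s d(m+s−1, n−s) + K·(m+n)·e^{c₀+3c}·n!·q₁^{m+n−1}, where c, c₀, q₁, K ≥ 0 are constants. Then d(m,n) ≤ K·(m+n)·n!·q₂^{m+n} for q₂ = 2e^{c₀+3c}·max(1, q₁), for all m, n. -/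
/-!
Induct on `m + n`. Every term `D (m+s) (n-s)` on the right-hand side has total index `m + n`,
so it is at most `K (m+n) (n-s)! q^(m+n)`. As `C(n,s) (n-s)! = n!/s!`, the sum is then at most
`K (m+n) n! q^(m+n) e^c ∑ (c₀+c)^s/s! ≤ K (m+n) n! q^(m+n) e^(c₀+2c)`, and adding the
inhomogeneous term gives at most `2 e^(c₀+3c) K (m+n+1) n! q^(m+n) ≤ K (m+n+1) n! q^(m+n+1)`.
-/

open Finset Real

theorem sum_choose_mul_pow_mul_factorial_le (n : ℕ) {x : ℝ} (hx : 0 ≤ x) :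
    ∑ s ∈ range (n + 1), (n.choose s : ℝ) * x ^ s * ((n - s).factorial : ℝ) ≤
      n.factorial * exp x := calc
  _ = n.factorial * ∑ s ∈ range (n + 1), x ^ s / s.factorial := by
    rw [mul_sum]
    refine sum_congr rfl fun s hs => ?_
    rw [Nat.cast_choose ℝ (Nat.lt_succ_iff.mp (mem_range.mp hs))]
    field_simp
  _ ≤ n.factorial * exp x := by gcongr; exact sum_le_exp_of_nonneg hx _

section RecursiveBound

variable {A x E q₁ q K : ℝ} {D : ℕ → ℕ → ℝ}

theorem recursive_bound_step (hA : 0 ≤ A) (hx : 0 ≤ x) (hq₁ : 0 ≤ q₁) (hK : 0 ≤ K)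
    (hAE : A * exp x ≤ E) (hq₁q : q₁ ≤ q) (hEq : 2 * E ≤ q) {m n : ℕ}
    (hrec : D (m + 1) n ≤
      (∑ s ∈ range (n + 1), (n.choose s : ℝ) * A * x ^ s * D (m + s) (n - s)) +
        K * ((m + 1 + n : ℕ) : ℝ) * E * (n.factorial : ℝ) * q₁ ^ (m + n))
    (hprev : ∀ s ≤ n,
      D (m + s) (n - s) ≤ K * ((m + n : ℕ) : ℝ) * ((n - s).factorial : ℝ) * q ^ (m + n)) :
    D (m + 1) n ≤ K * ((m + 1 + n : ℕ) : ℝ) * (n.factorial : ℝ) * q ^ (m + 1 + n) := by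
  have hE : 0 ≤ E := (mul_nonneg hA (exp_nonneg x)).trans hAE
  have hq : 0 ≤ q := by linarith
  have hmn : ((m + n : ℕ) : ℝ) ≤ ((m + 1 + n : ℕ) : ℝ) := by gcongr; omega
  set B := K * ((m + 1 + n : ℕ) : ℝ) * (n.factorial : ℝ) * q ^ (m + n)
  calc D (m + 1) n
      ≤ (∑ s ∈ range (n + 1), (n.choose s : ℝ) * A * x ^ s *
          (K * ((m + n : ℕ) : ℝ) * ((n - s).factorial : ℝ) * q ^ (m + n))) +
        K * ((m + 1 + n : ℕ) : ℝ) * E * (n.factorial : ℝ) * q ^ (m + n) := by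
        refine hrec.trans (add_le_add (sum_le_sum fun s hs => ?_) ?_)
        · gcongr
          exact hprev s (Nat.lt_succ_iff.mp (mem_range.mp hs))
        · gcongr
    _ = A * K * ((m + n : ℕ) : ℝ) * q ^ (m + n) *
          (∑ s ∈ range (n + 1), (n.choose s : ℝ) * x ^ s * ((n - s).factorial : ℝ)) +
        E * B := by
        rw [mul_sum]; congr 1
        · exact sum_congr rfl fun s _ => by ring
        · ring
    _ ≤ A * K * ((m + 1 + n : ℕ) : ℝ) * q ^ (m + n) * (n.factorial * exp x) + E * B := by
        gcongr
        exact sum_choose_mul_pow_mul_factorial_le n hx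
    _ = (A * exp x) * B + E * B := by ring
    _ ≤ 2 * E * B := by nlinarith [show 0 ≤ B by positivity]
    _ ≤ q * B := by gcongr
    _ = K * ((m + 1 + n : ℕ) : ℝ) * (n.factorial : ℝ) * q ^ (m + 1 + n) := by
        simp only [B]; ring

theorem le_of_recursive_bound (hA : 0 ≤ A) (hx : 0 ≤ x) (hq₁ : 0 ≤ q₁) (hK : 0 ≤ K)
    (hAE : A * exp x ≤ E) (hq₁q : q₁ ≤ q) (hEq : 2 * E ≤ q) (hbase : ∀ n, D 0 n = 0)
    (hrec : ∀ m n, D (m + 1) n ≤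
      (∑ s ∈ range (n + 1), (n.choose s : ℝ) * A * x ^ s * D (m + s) (n - s)) +
        K * ((m + 1 + n : ℕ) : ℝ) * E * (n.factorial : ℝ) * q₁ ^ (m + n))
    (m n : ℕ) :
    D m n ≤ K * ((m + n : ℕ) : ℝ) * (n.factorial : ℝ) * q ^ (m + n) := by
  have hq : 0 ≤ q := by nlinarith [exp_nonneg x]
  induction hN : m + n using Nat.strong_induction_on generalizing m n with
  | _ N ih =>
    subst hN
    rcases m with _ | m
    · rw [hbase]
      positivity
    · refine recursive_bound_step hA hx hq₁ hK hAE hq₁q hEq (hrec m n) fun s hs => ?_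
      exact ih (m + n) (by omega) (m + s) (n - s) (by omega)

end RecursiveBound

theorem stmt_17_general (c c₀ q₁ K : ℝ) (hc : 0 ≤ c) (hc₀ : 0 ≤ c₀) (hq₁ : 0 ≤ q₁)
    (hK : 0 ≤ K) (D : ℕ → ℕ → ℝ)
    (hbase : ∀ n, D 0 n = 0)
    (hrec : ∀ m n, D (m + 1) n ≤
      (∑ s ∈ Finset.range (n + 1),
        (n.choose s : ℝ) * Real.exp c * (c₀ + c) ^ s * D (m + s) (n - s)) +
        K * ((m + 1 + n : ℕ) : ℝ) * Real.exp (c₀ + 3 * c) *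
          (n.factorial : ℝ) * q₁ ^ (m + n)) :
    ∀ m n, D m n ≤
      K * ((m + n : ℕ) : ℝ) * (n.factorial : ℝ) *
        (2 * Real.exp (c₀ + 3 * c) * max 1 q₁) ^ (m + n) := by
  have h2E : 1 ≤ 2 * exp (c₀ + 3 * c) := by linarith [one_le_exp (by linarith : 0 ≤ c₀ + 3 * c)]
  have hAE : exp c * exp (c₀ + c) ≤ exp (c₀ + 3 * c) := by
    rw [← exp_add]
    exact exp_le_exp.2 (by linarith)
  have hq₁q : q₁ ≤ 2 * exp (c₀ + 3 * c) * max 1 q₁ :=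
    (le_max_right 1 q₁).trans (le_mul_of_one_le_left (by positivity) h2E)
  have hEq : 2 * exp (c₀ + 3 * c) ≤ 2 * exp (c₀ + 3 * c) * max 1 q₁ :=
    le_mul_of_one_le_right (by positivity) (le_max_left 1 q₁)
  exact le_of_recursive_bound (exp_nonneg c) (by linarith) hq₁ hK hAE hq₁q hEq hbase hrec

/-- recursive inequality implies factorial bound: if `D m n ≥ 0`,
`D 0 n = 0`, and for `m ≥ 1`
`D m n ≤ ∑_{s=0}^n (n choose s)·e^c·(c₀+c)^s·D (m+s-1) (n-s)
          + K·(m+n)·e^{c₀+3c}·n!·q₁^{m+n-1}`,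
then `D m n ≤ K·(m+n)·n!·q₂^{m+n}` with `q₂ = 2·e^{c₀+3c}·max 1 q₁`. -/
theorem stmt_17 (c c₀ q₁ K : ℝ) (hc : 0 ≤ c) (hc₀ : 0 ≤ c₀) (hq₁ : 0 ≤ q₁)
    (hK : 0 ≤ K) (D : ℕ → ℕ → ℝ)
    (hnonneg : ∀ m n, 0 ≤ D m n)
    (hbase : ∀ n, D 0 n = 0)
    (hrec : ∀ m n, D (m + 1) n ≤
      (∑ s ∈ Finset.range (n + 1),
        (n.choose s : ℝ) * Real.exp c * (c₀ + c) ^ s * D (m + s) (n - s)) +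
        K * ((m + 1 + n : ℕ) : ℝ) * Real.exp (c₀ + 3 * c) *
          (n.factorial : ℝ) * q₁ ^ (m + n)) :
    ∀ m n, D m n ≤
      K * ((m + n : ℕ) : ℝ) * (n.factorial : ℝ) *
        (2 * Real.exp (c₀ + 3 * c) * max 1 q₁) ^ (m + n) :=
  stmt_17_general c c₀ q₁ K hc hc₀ hq₁ hK D hbase hrec
end
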